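/- arXiv:math/0204212 — 7 statements merged into one kernel-verified Lean document; each statement's English description precedes it below -/
import Mathlib

section
/- For every x ∈ ℝⁿ and every integer 1 ≤ k with k² ≤ n, the norm ‖x‖′_k = inf{‖x′‖₂ + k‖x″‖_∞ : x = x′ + x″} satisfies (1/√2)·√(Σ_{i=1}^{k²} (x_i*)²) ≤ ‖x‖′_k ≤ √2·√(Σ_{i=1}^{k²} (x_i*)²), where (x_i*) is the non-increasing rearrangement of the absolute values of the coordinates of x. -/
open Real Finset

/-- Euclidean norm on `Fin n → ℝ`. -/
noncomputable def l2norm {n : ℕ} (x : Fin n → ℝ) : ℝ := Real.sqrt (∑ i, x i ^ 2)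

/-- Supremum norm on `Fin n → ℝ`. -/
noncomputable def linfnorm {n : ℕ} (x : Fin n → ℝ) : ℝ := sSup (Set.range fun i => |x i|)

/-- The interpolation norm `‖x‖′_k = inf{‖x′‖₂ + k‖x″‖_∞ : x = x′ + x″}`. -/
noncomputable def Knorm {n : ℕ} (k : ℕ) (x : Fin n → ℝ) : ℝ :=
  sInf {r : ℝ | ∃ x' x'' : Fin n → ℝ, x = x' + x'' ∧ r = l2norm x' + k * linfnorm x''}

lemma card_filter_val_lt {n m : ℕ} (h : m ≤ n) :
    (Finset.univ.filter fun i : Fin n => (i : ℕ) < m).card = m := by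
  rcases eq_or_lt_of_le h with rfl | h
  · rw [Finset.filter_true_of_mem (fun i _ => i.isLt)]; simp
  · have : (Finset.univ.filter fun i : Fin n => (i : ℕ) < m) = Finset.Iio ⟨m, h⟩ := by
      ext i; simp [Fin.lt_def]
    rw [this, Fin.card_Iio]

lemma add_le_sqrt_two_mul (a b : ℝ) (ha : 0 ≤ a) (hb : 0 ≤ b) :
    a + b ≤ Real.sqrt 2 * Real.sqrt (a ^ 2 + b ^ 2) := by
  rw [← Real.sqrt_mul (by norm_num)]
  rw [show a + b = Real.sqrt ((a + b) ^ 2) from (Real.sqrt_sq (by positivity)).symm]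
  apply Real.sqrt_le_sqrt
  nlinarith [sq_nonneg (a - b)]

lemma l2norm_nonneg {n : ℕ} (x : Fin n → ℝ) : 0 ≤ l2norm x := Real.sqrt_nonneg _

lemma abs_le_linfnorm {n : ℕ} (x : Fin n → ℝ) (i : Fin n) : |x i| ≤ linfnorm x :=
  le_csSup ((Set.finite_range _).bddAbove) ⟨i, rfl⟩

lemma linfnorm_nonneg {n : ℕ} [Nonempty (Fin n)] (x : Fin n → ℝ) : 0 ≤ linfnorm x :=
  le_trans (abs_nonneg _) (abs_le_linfnorm x (Classical.arbitrary _))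

/-- `‖x‖′_k` is equivalent, up to a factor `√2`, to the `ℓ²` norm of the `k²` largest
coordinates (in absolute value) of `x`. Here `σ` realizes the non-increasing
rearrangement `x_i* = |x(σ i)|`. -/
theorem Knorm_equiv_rearrangement {n k : ℕ} (hk : 1 ≤ k) (hkn : k ^ 2 ≤ n)
    (x : Fin n → ℝ) (σ : Equiv.Perm (Fin n)) (hσ : Antitone fun i => |x (σ i)|) :
    (1 / Real.sqrt 2) * Real.sqrt (∑ i ∈ Finset.univ.filter (fun i : Fin n => (i : ℕ) < k ^ 2), |x (σ i)| ^ 2)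
        ≤ Knorm k x ∧
      Knorm k x ≤
        Real.sqrt 2 * Real.sqrt (∑ i ∈ Finset.univ.filter (fun i : Fin n => (i : ℕ) < k ^ 2), |x (σ i)| ^ 2) := by
  have hn : 0 < n := lt_of_lt_of_le (by positivity) hkn
  haveI : Nonempty (Fin n) := ⟨⟨0, hn⟩⟩
  set F := Finset.univ.filter (fun i : Fin n => (i : ℕ) < k ^ 2) with hF
  have hcard : F.card = k ^ 2 := card_filter_val_lt hkn
  set Q := ∑ i ∈ F, |x (σ i)| ^ 2 with hQ
  have hQ0 : 0 ≤ Q := Finset.sum_nonneg fun i _ => by positivity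
  set S := Real.sqrt Q with hS
  have hsqrt2 : Real.sqrt 2 * Real.sqrt 2 = 2 := Real.mul_self_sqrt (by norm_num)
  have hsqrt2pos : 0 < Real.sqrt 2 := Real.sqrt_pos.mpr (by norm_num)
  constructor
  · -- lower bound
    refine le_csInf ⟨l2norm x + k * linfnorm 0, ⟨x, 0, by simp, rfl⟩⟩ ?_
    rintro r ⟨x', x'', hx, rfl⟩
    set A := l2norm x' with hA
    set M := linfnorm x'' with hM
    have hA0 : 0 ≤ A := l2norm_nonneg _
    have hM0 : 0 ≤ M := linfnorm_nonneg _
    have hA2 : A ^ 2 = ∑ i, x' i ^ 2 :=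
      Real.sq_sqrt (Finset.sum_nonneg fun i _ => sq_nonneg _)
    have key : Q ≤ 2 * (A + k * M) ^ 2 := by
      have h1 : ∀ i ∈ F, |x (σ i)| ^ 2 ≤ 2 * x' (σ i) ^ 2 + 2 * M ^ 2 := by
        intro i _
        have h2 : |x'' (σ i)| ≤ M := abs_le_linfnorm x'' (σ i)
        have h3 : x (σ i) = x' (σ i) + x'' (σ i) := by rw [hx]; rfl
        have h4 : x'' (σ i) ^ 2 ≤ M ^ 2 := by
          nlinarith [sq_abs (x'' (σ i)), abs_nonneg (x'' (σ i))]
        calc |x (σ i)| ^ 2 = (x' (σ i) + x'' (σ i)) ^ 2 := by rw [sq_abs, h3]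
          _ ≤ 2 * x' (σ i) ^ 2 + 2 * M ^ 2 := by
              nlinarith [sq_nonneg (x' (σ i) - x'' (σ i))]
      have h5 : Q ≤ ∑ i ∈ F, (2 * x' (σ i) ^ 2 + 2 * M ^ 2) := Finset.sum_le_sum h1
      have h6 : ∑ i ∈ F, x' (σ i) ^ 2 ≤ A ^ 2 := by
        rw [hA2, ← Equiv.sum_comp σ (fun i => x' i ^ 2)]
        exact Finset.sum_le_sum_of_subset_of_nonneg (Finset.subset_univ _)
          (fun i _ _ => sq_nonneg _)
      have h7 : ∑ i ∈ F, (2 * x' (σ i) ^ 2 + 2 * M ^ 2)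
          = 2 * (∑ i ∈ F, x' (σ i) ^ 2) + 2 * (k ^ 2 : ℝ) * M ^ 2 := by
        rw [Finset.sum_add_distrib, Finset.sum_const, hcard, ← Finset.mul_sum]
        ring
      have hkM : (0:ℝ) ≤ (k:ℝ) * M := by positivity
      nlinarith [sq_nonneg ((k:ℝ) * M), mul_nonneg hA0 hkM]
    have hSle : S ≤ Real.sqrt 2 * (A + k * M) := by
      have : S ≤ Real.sqrt (2 * (A + k * M) ^ 2) := Real.sqrt_le_sqrt key
      rwa [Real.sqrt_mul (by norm_num), Real.sqrt_sq (by positivity)] at this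
    rw [div_mul_eq_mul_div, div_le_iff₀ hsqrt2pos]
    calc (1 : ℝ) * S = S := one_mul S
      _ ≤ Real.sqrt 2 * (A + k * M) := hSle
      _ = (A + (k:ℝ) * M) * Real.sqrt 2 := by ring
  · -- upper bound
    set j : Fin n := ⟨k ^ 2 - 1, by omega⟩ with hj
    set θ := |x (σ j)| with hθ
    have hθ0 : 0 ≤ θ := abs_nonneg _
    set x'' : Fin n → ℝ := fun i => max (-θ) (min θ (x i)) with hx''
    set x' : Fin n → ℝ := x - x'' with hx'
    have hdecomp : x = x' + x'' := by rw [hx']; ring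
    have hx''le : ∀ i, |x'' i| ≤ θ := by
      intro i
      rw [abs_le]
      exact ⟨le_max_left _ _, max_le (neg_le_self hθ0) (min_le_left _ _)⟩
    have hθhead : ∀ i : Fin n, (i : ℕ) < k ^ 2 → θ ≤ |x (σ i)| := by
      intro i hi
      exact hσ (show i ≤ j by rw [Fin.le_def]; simp only [hj]; omega)
    have htail : ∀ i : Fin n, ¬ (i : ℕ) < k ^ 2 → x' (σ i) = 0 := by
      intro i hi
      have hji : j ≤ i := by rw [Fin.le_def]; simp only [hj]; omega
      have habs : |x (σ i)| ≤ θ := hσ hji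
      have h := abs_le.mp habs
      simp only [hx', Pi.sub_apply, hx'']
      rw [min_eq_right h.2, max_eq_right h.1, sub_self]
    have hhead : ∀ i : Fin n, θ ≤ |x (σ i)| → x' (σ i) ^ 2 ≤ (|x (σ i)| - θ) ^ 2 := by
      intro i hi
      simp only [hx', Pi.sub_apply, hx'']
      rcases le_or_gt 0 (x (σ i)) with h | h
      · rw [abs_of_nonneg h] at hi ⊢
        rw [min_eq_left hi, max_eq_right (le_trans (neg_nonpos_of_nonneg hθ0) hθ0)]
      · rw [abs_of_neg h] at hi ⊢
        rw [min_eq_right (le_trans h.le hθ0),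
          max_eq_left (by linarith)]
        nlinarith
    set B := Real.sqrt (∑ i ∈ F, (|x (σ i)| - θ) ^ 2) with hB
    have hBsum0 : 0 ≤ ∑ i ∈ F, (|x (σ i)| - θ) ^ 2 :=
      Finset.sum_nonneg fun i _ => sq_nonneg _
    have hB0 : 0 ≤ B := Real.sqrt_nonneg _
    have hAleB : l2norm x' ≤ B := by
      apply Real.sqrt_le_sqrt
      rw [← Equiv.sum_comp σ (fun i => x' i ^ 2)]
      rw [← Finset.sum_filter_add_sum_filter_not Finset.univ (fun i : Fin n => (i:ℕ) < k ^ 2)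
        (fun i => x' (σ i) ^ 2)]
      have h1 : ∑ i ∈ Finset.univ.filter (fun i : Fin n => ¬ (i:ℕ) < k ^ 2), x' (σ i) ^ 2 = 0 :=
        Finset.sum_eq_zero fun i hi => by
          rw [htail i (Finset.mem_filter.mp hi).2]; ring
      rw [h1, add_zero]
      exact Finset.sum_le_sum fun i hi =>
        hhead i (hθhead i (Finset.mem_filter.mp hi).2)
    have hMleθ : linfnorm x'' ≤ θ := csSup_le (Set.range_nonempty _) (by rintro b ⟨i, rfl⟩; exact hx''le i)
    have hmem : l2norm x' + k * linfnorm x'' ∈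
        {r : ℝ | ∃ y' y'' : Fin n → ℝ, x = y' + y'' ∧ r = l2norm y' + k * linfnorm y''} :=
      ⟨x', x'', hdecomp, rfl⟩
    have hbdd : BddBelow {r : ℝ | ∃ y' y'' : Fin n → ℝ, x = y' + y'' ∧ r = l2norm y' + k * linfnorm y''} := by
      refine ⟨0, ?_⟩
      rintro r ⟨y', y'', _, rfl⟩
      have := l2norm_nonneg y'
      have := linfnorm_nonneg y''
      positivity
    have hstep : l2norm x' + k * linfnorm x'' ≤ Real.sqrt 2 * S := by
      have h2 : l2norm x' + k * linfnorm x'' ≤ B + k * θ := by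
        have : (k:ℝ) * linfnorm x'' ≤ k * θ := by
          apply mul_le_mul_of_nonneg_left hMleθ (by positivity)
        linarith
      have h3 : B + k * θ ≤ Real.sqrt 2 * Real.sqrt (B ^ 2 + ((k:ℝ) * θ) ^ 2) :=
        add_le_sqrt_two_mul B ((k:ℝ) * θ) hB0 (by positivity)
      have h4 : B ^ 2 + ((k:ℝ) * θ) ^ 2 ≤ Q := by
        have hB2 : B ^ 2 = ∑ i ∈ F, (|x (σ i)| - θ) ^ 2 := Real.sq_sqrt hBsum0
        have hkθ : ((k:ℝ) * θ) ^ 2 = ∑ i ∈ F, θ ^ 2 := by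
          rw [Finset.sum_const, hcard]
          ring
        rw [hB2, hkθ, ← Finset.sum_add_distrib]
        apply Finset.sum_le_sum
        intro i hi
        have h5 : θ ≤ |x (σ i)| := hθhead i (Finset.mem_filter.mp hi).2
        nlinarith
      have h6 : Real.sqrt (B ^ 2 + ((k:ℝ) * θ) ^ 2) ≤ S := Real.sqrt_le_sqrt h4
      calc l2norm x' + k * linfnorm x'' ≤ B + k * θ := h2
        _ ≤ Real.sqrt 2 * Real.sqrt (B ^ 2 + ((k:ℝ) * θ) ^ 2) := h3
        _ ≤ Real.sqrt 2 * S := by nlinarith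
    exact le_trans (csInf_le hbdd hmem) hstep
end

section
/- For any x ∈ ℝⁿ and integer k with k² ≤ n: ‖x‖′_k ≤ √(Σ_{i=1}^{k²}(x_i* − x_{k²}*)²) + k·x_{k²}* ≤ √2 · √(Σ_{i=1}^{k²}(x_i*)²), where (x_i*) is the non-increasing rearrangement of |x_i| and ‖x‖′_k = inf{‖x′‖₂ + k‖x″‖_∞ : x = x′ + x″}. -/
open Real Finset

/-- The upper bound for `‖x‖′_k` via soft thresholding at the `k²`-th largest coordinate:
`‖x‖′_k ≤ √(Σ_{i≤k²}(x_i* − x_{k²}*)²) + k·x_{k²}* ≤ √2·√(Σ_{i≤k²}(x_i*)²)`.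
Here `σ` realizes the non-increasing rearrangement `x_i* = |x(σ i)|` (0-indexed), so
`x_{k²}*` is `|x(σ m)|` with `m = k² − 1`. -/
theorem Knorm_upper_bound {n k : ℕ} (hk : 1 ≤ k) (hkn : k ^ 2 ≤ n)
    (x : Fin n → ℝ) (σ : Equiv.Perm (Fin n)) (hσ : Antitone fun i => |x (σ i)|) :
    Knorm k x ≤
        Real.sqrt (∑ i ∈ Finset.univ.filter (fun i : Fin n => (i : ℕ) < k ^ 2),
            (|x (σ i)| - |x (σ ⟨k ^ 2 - 1, by have h1 : 1 ≤ k ^ 2 := Nat.one_le_pow 2 k hk; omega⟩)|) ^ 2)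
          + k * |x (σ ⟨k ^ 2 - 1, by have h1 : 1 ≤ k ^ 2 := Nat.one_le_pow 2 k hk; omega⟩)| ∧
      Real.sqrt (∑ i ∈ Finset.univ.filter (fun i : Fin n => (i : ℕ) < k ^ 2),
            (|x (σ i)| - |x (σ ⟨k ^ 2 - 1, by have h1 : 1 ≤ k ^ 2 := Nat.one_le_pow 2 k hk; omega⟩)|) ^ 2)
          + k * |x (σ ⟨k ^ 2 - 1, by have h1 : 1 ≤ k ^ 2 := Nat.one_le_pow 2 k hk; omega⟩)|
        ≤ Real.sqrt 2 *
            Real.sqrt (∑ i ∈ Finset.univ.filter (fun i : Fin n => (i : ℕ) < k ^ 2), |x (σ i)| ^ 2) := by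

  have h1 : 1 ≤ k ^ 2 := Nat.one_le_pow 2 k hk
  set m : Fin n := ⟨k ^ 2 - 1, by omega⟩ with hm
  set t : ℝ := |x (σ m)| with ht
  have ht0 : 0 ≤ t := abs_nonneg _
  -- the decomposition
  set x'' : Fin n → ℝ := fun i => max (-t) (min t (x i)) with hx''
  set x' : Fin n → ℝ := fun i => x i - x'' i with hx'
  have hdec : x = x' + x'' := by funext i; simp [hx', hx'']
  -- pointwise formula for x'
  have key : ∀ a : ℝ, (a - max (-t) (min t a)) ^ 2 = (max (|a| - t) 0) ^ 2 := by
    intro a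
    rcases le_total a t with h | h
    · rcases le_total (-t) a with h2 | h2
      · have : max (-t) (min t a) = a := by
          rw [min_eq_right h, max_eq_right h2]
        rw [this]
        have : max (|a| - t) 0 = 0 := by
          rw [max_eq_right]
          rw [sub_nonpos]
          exact abs_le.mpr ⟨h2, h⟩
        simp [this]
      · have : max (-t) (min t a) = -t := by
          rw [min_eq_right h, max_eq_left h2]
        rw [this]
        have ha : |a| = -a := abs_of_nonpos (by linarith)
        have : max (|a| - t) 0 = |a| - t := max_eq_left (by linarith [neg_le_neg h2])
        rw [this, ha]; ring
    · have : max (-t) (min t a) = t := by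
        rw [min_eq_left h, max_eq_right (by linarith)]
      rw [this]
      have ha : |a| = a := abs_of_nonneg (by linarith)
      have : max (|a| - t) 0 = |a| - t := max_eq_left (by rw [ha]; linarith)
      rw [this, ha]
  -- |x'' i| ≤ t
  have hx''le : ∀ i, |x'' i| ≤ t := by
    intro i
    rw [abs_le]
    constructor
    · exact le_max_left _ _
    · exact max_le (by linarith) (min_le_left _ _)
  have hne : n ≠ 0 := by omega
  haveI : NeZero n := ⟨hne⟩
  -- linfnorm bound
  have hlinf : linfnorm x'' ≤ t := by
    apply csSup_le (Set.range_nonempty _)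
    rintro r ⟨i, rfl⟩; exact hx''le i
  have hlinf0 : 0 ≤ linfnorm x'' := by
    have : |x'' 0| ∈ Set.range fun i => |x'' i| := ⟨0, rfl⟩
    calc (0:ℝ) ≤ |x'' 0| := abs_nonneg _
    _ ≤ _ := le_csSup ((Set.finite_range _).bddAbove) this
  -- l2norm computation
  have hsum : ∑ i, x' i ^ 2 = ∑ i ∈ Finset.univ.filter (fun i : Fin n => (i : ℕ) < k ^ 2),
      (|x (σ i)| - t) ^ 2 := by
    have h2 : ∑ i, x' i ^ 2 = ∑ i, (max (|x (σ i)| - t) 0) ^ 2 := by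
      rw [← Equiv.sum_comp σ (fun i => x' i ^ 2)]
      refine Finset.sum_congr rfl fun i _ => ?_
      simp only [hx', hx'']
      exact key (x (σ i))
    rw [h2, ← Finset.sum_filter_add_sum_filter_not Finset.univ (fun i : Fin n => (i : ℕ) < k ^ 2)]
    have hz : ∑ i ∈ Finset.univ.filter (fun i : Fin n => ¬ (i : ℕ) < k ^ 2),
        (max (|x (σ i)| - t) 0) ^ 2 = 0 := by
      apply Finset.sum_eq_zero
      intro i hi
      simp only [Finset.mem_filter, not_lt] at hi
      have hmi : m ≤ i := by
        rw [Fin.le_def]; simp [hm]; omega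
      have : |x (σ i)| ≤ t := hσ hmi
      rw [max_eq_right (by linarith)]
      simp
    rw [hz, add_zero]
    refine Finset.sum_congr rfl fun i hi => ?_
    simp only [Finset.mem_filter] at hi
    have him : i ≤ m := by
      rw [Fin.le_def]; simp [hm]; omega
    have : t ≤ |x (σ i)| := hσ him
    rw [max_eq_left (by linarith)]
  have hl2 : l2norm x' = Real.sqrt (∑ i ∈ Finset.univ.filter (fun i : Fin n => (i : ℕ) < k ^ 2),
      (|x (σ i)| - t) ^ 2) := by
    rw [l2norm, hsum]
  constructor
  · -- Knorm ≤ decomposition value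
    have hmem : l2norm x' + k * linfnorm x'' ∈
        {r : ℝ | ∃ x' x'' : Fin n → ℝ, x = x' + x'' ∧ r = l2norm x' + k * linfnorm x''} :=
      ⟨x', x'', hdec, rfl⟩
    have hbdd : BddBelow {r : ℝ | ∃ x' x'' : Fin n → ℝ, x = x' + x'' ∧ r = l2norm x' + k * linfnorm x''} := by
      refine ⟨0, ?_⟩
      rintro r ⟨a, b, _, rfl⟩
      have h1 : 0 ≤ l2norm a := Real.sqrt_nonneg _
      have h2 : 0 ≤ linfnorm b := by
        have : |b 0| ∈ Set.range fun i => |b i| := ⟨0, rfl⟩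
        calc (0:ℝ) ≤ |b 0| := abs_nonneg _
        _ ≤ _ := le_csSup ((Set.finite_range _).bddAbove) this
      positivity
    calc Knorm k x ≤ l2norm x' + k * linfnorm x'' := csInf_le hbdd hmem
    _ ≤ _ := by
        rw [hl2]
        gcongr
  · -- second inequality
    set A := ∑ i ∈ Finset.univ.filter (fun i : Fin n => (i : ℕ) < k ^ 2), (|x (σ i)| - t) ^ 2 with hA
    set C := ∑ i ∈ Finset.univ.filter (fun i : Fin n => (i : ℕ) < k ^ 2), |x (σ i)| ^ 2 with hC
    have hA0 : 0 ≤ A := Finset.sum_nonneg fun i _ => sq_nonneg _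
    have hC0 : 0 ≤ C := Finset.sum_nonneg fun i _ => sq_nonneg _
    have hcard : (Finset.univ.filter (fun i : Fin n => (i : ℕ) < k ^ 2)).card = k ^ 2 := by
      rw [← Finset.card_range (k ^ 2)]
      refine Finset.card_nbij (i := fun i => (i : ℕ)) ?_ ?_ ?_
      · intro a ha; simp at ha ⊢; omega
      · intro a ha b hb hab; exact Fin.ext hab
      · intro a ha; simp at ha ⊢; exact ⟨⟨a, by omega⟩, by simpa, rfl⟩
    have hsplit : A + (k : ℝ) ^ 2 * t ^ 2 ≤ C := by
      have : (k:ℝ) ^ 2 * t ^ 2 = ∑ i ∈ Finset.univ.filter (fun i : Fin n => (i : ℕ) < k ^ 2), t ^ 2 := by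
        rw [Finset.sum_const, hcard]; push_cast; ring
      rw [this, hA, hC, ← Finset.sum_add_distrib]
      refine Finset.sum_le_sum fun i hi => ?_
      simp only [Finset.mem_filter] at hi
      have him : i ≤ m := by rw [Fin.le_def]; simp [hm]; omega
      have hti : t ≤ |x (σ i)| := hσ him
      nlinarith
    have hkt : (k : ℝ) * t = Real.sqrt ((k:ℝ) ^ 2 * t ^ 2) := by
      rw [show (k:ℝ) ^ 2 * t ^ 2 = ((k:ℝ) * t) ^ 2 by ring, Real.sqrt_sq (by positivity)]
    rw [hkt]
    have h2 : Real.sqrt A + Real.sqrt ((k:ℝ)^2 * t^2) ≤ Real.sqrt 2 * Real.sqrt (A + (k:ℝ)^2*t^2) := by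
      have hB0 : (0:ℝ) ≤ (k:ℝ)^2 * t^2 := by positivity
      have sA := Real.sq_sqrt hA0
      have sB := Real.sq_sqrt hB0
      have sS := Real.sq_sqrt (by positivity : (0:ℝ) ≤ A + (k:ℝ)^2*t^2)
      have s2 := Real.sq_sqrt (by norm_num : (0:ℝ) ≤ 2)
      have h4 : 0 ≤ Real.sqrt A := Real.sqrt_nonneg _
      have h5 : 0 ≤ Real.sqrt ((k:ℝ)^2*t^2) := Real.sqrt_nonneg _
      have h6 : 0 ≤ Real.sqrt (A + (k:ℝ)^2*t^2) := Real.sqrt_nonneg _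
      have h7 : 0 ≤ Real.sqrt 2 := Real.sqrt_nonneg _
      have hsq : (Real.sqrt A + Real.sqrt ((k:ℝ)^2*t^2))^2 ≤ (Real.sqrt 2 * Real.sqrt (A + (k:ℝ)^2*t^2))^2 := by
        have e1 : (Real.sqrt 2 * Real.sqrt (A + (k:ℝ)^2*t^2))^2 = 2*(A + (k:ℝ)^2*t^2) := by
          rw [mul_pow, sS, s2]
        nlinarith [sq_nonneg (Real.sqrt A - Real.sqrt ((k:ℝ)^2*t^2))]
      exact le_of_pow_le_pow_left₀ two_ne_zero (mul_nonneg h7 h6) hsq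
    calc Real.sqrt A + Real.sqrt ((k:ℝ)^2*t^2) ≤ Real.sqrt 2 * Real.sqrt (A + (k:ℝ)^2*t^2) := h2
    _ ≤ Real.sqrt 2 * Real.sqrt C := by gcongr
end

section
/- Let X₁, …, Xₙ be (not necessarily independent) nonnegative random variables with E e^{X_i} ≤ C for each i, and let X₁* ≥ X₂* ≥ … ≥ Xₙ* be their non-increasing rearrangement. Then for every 1 ≤ k ≤ n: E √((1/k) Σ_{i=1}^k (X_i*)²) ≤ c₂ log(2Cn/k), for a universal constant c₂. -/
/-! Jensen's inequality for the function `t ↦ exp √t`, convex on `[1, ∞)`, at the points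
`1 + y_i²`, combined with `√(1 + y²) ≤ 1 + y`, gives pointwise
`√((1/k) Σ_{i<k} (X_i*)²) ≤ 1 + log((1/k) Σ_i exp X_i)`.
Taking expectations, concavity of `log` (through one of its tangent lines) and
`E Σ_i exp X_i ≤ nC` bound the expectation by `1 + log(nC/k)`, which is at most `4 log(2Cn/k)`
because `C ≥ 1`. -/

open MeasureTheory Real Finset

lemma convexOn_exp_sqrt : ConvexOn ℝ (Set.Ici 1) fun t => exp √t := by
  have hf' : ∀ x : ℝ, 0 < x → HasDerivAt (fun t => exp √t) (exp √x / (2 * √x)) x :=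
    fun x hx => by simpa [div_eq_mul_inv] using (hasDerivAt_sqrt hx.ne').exp
  have hf'' : ∀ x : ℝ, 0 < x → HasDerivAt (fun t => exp √t / (2 * √t))
      (exp √x * (√x - 1) / (4 * √x ^ 3)) x := by
    intro x hx
    have hs : 0 < √x := sqrt_pos.mpr hx
    refine ((hf' x hx).div ((hasDerivAt_sqrt hx.ne').const_mul 2) (by positivity)).congr_deriv ?_
    field_simp
    ring
  refine convexOn_of_hasDerivWithinAt2_nonneg (f' := fun x => exp √x / (2 * √x))
    (f'' := fun x => exp √x * (√x - 1) / (4 * √x ^ 3)) (convex_Ici 1) (by fun_prop) ?_ ?_ ?_ <;>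
    rw [interior_Ici] <;> intro x (hx : 1 < x)
  · exact (hf' x (by linarith)).hasDerivWithinAt
  · exact (hf'' x (by linarith)).hasDerivWithinAt
  · have : 1 ≤ √x := one_le_sqrt.mpr hx.le
    have : 0 ≤ √x - 1 := by linarith
    positivity

lemma sqrt_mean_sq_le_one_add_log_mean_exp {ι : Type*} {s : Finset ι} (hs : s.Nonempty)
    {y : ι → ℝ} (hy : ∀ i ∈ s, 0 ≤ y i) :
    √((#s : ℝ)⁻¹ * ∑ i ∈ s, y i ^ 2) ≤ 1 + log ((#s : ℝ)⁻¹ * ∑ i ∈ s, exp (y i)) := by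
  set w : ℝ := (#s : ℝ)⁻¹
  have hw : 0 < w := by positivity
  have hw_sum : ∑ _i ∈ s, w = 1 := by simp [w, hs.card_ne_zero]
  have hmean : ∑ i ∈ s, w • (1 + y i ^ 2) = 1 + w * ∑ i ∈ s, y i ^ 2 := by
    simp only [smul_eq_mul, mul_add, sum_add_distrib, mul_one, hw_sum, mul_sum]
  have hjensen : exp √(1 + w * ∑ i ∈ s, y i ^ 2) ≤ ∑ i ∈ s, w * exp √(1 + y i ^ 2) := by
    have h := convexOn_exp_sqrt.map_sum_le (fun _ _ => hw.le) hw_sum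
      fun i _ => show 1 ≤ 1 + y i ^ 2 from le_add_of_nonneg_right (sq_nonneg _)
    rw [hmean] at h
    simpa only [smul_eq_mul] using h
  have hterm : ∀ i ∈ s, exp √(1 + y i ^ 2) ≤ exp 1 * exp (y i) := by
    intro i hi
    rw [← exp_add, exp_le_exp, sqrt_le_left (by linarith [hy i hi])]
    nlinarith [hy i hi]
  have hbound : exp √(1 + w * ∑ i ∈ s, y i ^ 2) ≤ exp 1 * (w * ∑ i ∈ s, exp (y i)) :=
    calc _ ≤ ∑ i ∈ s, w * exp √(1 + y i ^ 2) := hjensen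
      _ ≤ ∑ i ∈ s, w * (exp 1 * exp (y i)) :=
        sum_le_sum fun i hi => mul_le_mul_of_nonneg_left (hterm i hi) hw.le
      _ = exp 1 * (w * ∑ i ∈ s, exp (y i)) := by simp only [mul_sum]; ring_nf
  calc √(w * ∑ i ∈ s, y i ^ 2) ≤ √(1 + w * ∑ i ∈ s, y i ^ 2) := sqrt_le_sqrt (by linarith)
    _ ≤ log (exp 1 * (w * ∑ i ∈ s, exp (y i))) := (le_log_iff_exp_le (by positivity)).2 hbound
    _ = 1 + log (w * ∑ i ∈ s, exp (y i)) := by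
      rw [log_mul (exp_ne_zero 1) (by positivity), log_exp]

lemma sqrt_mean_sq_comp_perm_le {ι : Type*} [Fintype ι] {s : Finset ι} (hs : s.Nonempty)
    {x : ι → ℝ} (hx : ∀ i, 0 ≤ x i) (σ : Equiv.Perm ι) :
    √((#s : ℝ)⁻¹ * ∑ i ∈ s, x (σ i) ^ 2) ≤ 1 + log ((#s : ℝ)⁻¹ * ∑ i, exp (x i)) := by
  have hsum : ∑ i ∈ s, exp (x (σ i)) ≤ ∑ i, exp (x i) :=
    calc _ ≤ ∑ i, exp (x (σ i)) :=
          sum_le_sum_of_subset_of_nonneg (subset_univ s) fun i _ _ => (exp_pos _).le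
      _ = ∑ i, exp (x i) := Equiv.sum_comp σ fun j => exp (x j)
  have := sum_pos (fun i _ => exp_pos (x (σ i))) hs
  calc _ ≤ 1 + log ((#s : ℝ)⁻¹ * ∑ i ∈ s, exp (x (σ i))) :=
        sqrt_mean_sq_le_one_add_log_mean_exp hs fun i _ => hx (σ i)
    _ ≤ 1 + log ((#s : ℝ)⁻¹ * ∑ i, exp (x i)) := by gcongr

lemma one_le_of_integral_exp_le {Ω : Type*} [MeasurableSpace Ω] {μ : Measure Ω}
    [IsProbabilityMeasure μ] {f : Ω → ℝ} {C : ℝ} (hf : ∀ ω, 0 ≤ f ω)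
    (hf_int : Integrable (fun ω => exp (f ω)) μ) (hC : ∫ ω, exp (f ω) ∂μ ≤ C) : 1 ≤ C :=
  calc 1 = ∫ _, (1 : ℝ) ∂μ := by simp
    _ ≤ ∫ ω, exp (f ω) ∂μ := integral_mono (integrable_const 1) hf_int fun ω => one_le_exp (hf ω)
    _ ≤ C := hC

lemma integral_le_log_of_le_log {Ω : Type*} [MeasurableSpace Ω] {μ : Measure Ω}
    [IsProbabilityMeasure μ] {f Z : Ω → ℝ} {M : ℝ} (hM : 0 < M) (hf : ∀ ω, 0 ≤ f ω)
    (hfZ : ∀ ω, f ω ≤ log (Z ω)) (hZ : Integrable Z μ) (hZ_pos : ∀ ω, 0 < Z ω)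
    (hZM : ∫ ω, Z ω ∂μ ≤ M) : ∫ ω, f ω ∂μ ≤ log M := by
  have htangent : ∀ ω, f ω ≤ log M + Z ω / M - 1 := by
    intro ω
    have h := log_le_sub_one_of_pos (div_pos (hZ_pos ω) hM)
    rw [log_div (hZ_pos ω).ne' hM.ne'] at h
    linarith [hfZ ω]
  have hint : Integrable (fun ω => log M + Z ω / M) μ := (integrable_const _).add (hZ.div_const M)
  calc ∫ ω, f ω ∂μ ≤ ∫ ω, (log M + Z ω / M - 1) ∂μ :=
        integral_mono_of_nonneg (.of_forall hf) (hint.sub (integrable_const 1)) (.of_forall htangent)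
    _ = log M + (∫ ω, Z ω ∂μ) / M - 1 := by
        rw [integral_sub hint (integrable_const 1), integral_add (integrable_const _) (hZ.div_const M),
          integral_div]
        simp
    _ ≤ log M := by linarith [(div_le_one hM).2 hZM]

lemma log_exp_one_mul_le_four_mul_log_two_mul {a : ℝ} (ha : 1 ≤ a) :
    log (exp 1 * a) ≤ 4 * log (2 * a) := by
  rw [log_mul (exp_ne_zero 1) (by linarith), log_exp, log_mul two_ne_zero (by linarith)]
  linarith [log_nonneg ha, log_two_gt_d9]

/-- Order statistics of ψ₁ random variables: if `E e^{X_i} ≤ C` and `(Y i)` is the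
pointwise non-increasing rearrangement of the nonnegative `(X i)`, then
`E √((1/k) Σ_{i<k} (X_i*)²) ≤ c₂ log(2Cn/k)` for a universal constant `c₂`. -/
theorem psi1_order_statistics :
    ∃ c₂ : ℝ, 0 < c₂ ∧
      ∀ (Ω : Type) (mΩ : MeasureSpace Ω), IsProbabilityMeasure (volume : Measure Ω) →
      ∀ (n k : ℕ), 1 ≤ k → k ≤ n →
      ∀ (C : ℝ) (X Y : Fin n → Ω → ℝ),
        (∀ i, Measurable (X i)) →
        (∀ i ω, 0 ≤ X i ω) →
        (∀ i, Integrable (fun ω => Real.exp (X i ω))) →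
        (∀ i, ∫ ω, Real.exp (X i ω) ≤ C) →
        (∀ ω, ∃ σ : Equiv.Perm (Fin n),
          (∀ i, Y i ω = X (σ i) ω) ∧ Antitone fun i => Y i ω) →
        ∫ ω, Real.sqrt ((1 / (k : ℝ)) *
            ∑ i ∈ Finset.univ.filter (fun i : Fin n => (i : ℕ) < k), (Y i ω) ^ 2)
          ≤ c₂ * Real.log (2 * C * n / k) := by
  refine ⟨4, by norm_num, fun Ω _ _ n k hk hkn C X Y _ hX hX_int hX_le hY => ?_⟩
  have i₀ : Fin n := ⟨0, by omega⟩
  have hC := one_le_of_integral_exp_le (hX i₀) (hX_int i₀) (hX_le i₀)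
  have ha : 1 ≤ (k : ℝ)⁻¹ * (n * C) := by
    rw [← div_eq_inv_mul, le_div_iff₀ (by positivity)]
    nlinarith [(Nat.cast_le (α := ℝ)).2 hkn]
  set F := univ.filter fun i : Fin n => (i : ℕ) < k
  have hF : #F = k := by simp [F, Fin.card_filter_val_lt, hkn]
  set Z : Ω → ℝ := fun ω => exp 1 * ((k : ℝ)⁻¹ * ∑ i, exp (X i ω))
  have hS_pos : ∀ ω, 0 < (k : ℝ)⁻¹ * ∑ i, exp (X i ω) := fun ω =>
    mul_pos (by positivity) (sum_pos (fun i _ => exp_pos (X i ω)) (univ_nonempty_iff.2 ⟨i₀⟩))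
  have hZ_pos : ∀ ω, 0 < Z ω := fun ω => mul_pos (exp_pos 1) (hS_pos ω)
  have hZ_int : Integrable Z := ((integrable_finsetSum _ fun i _ => hX_int i).const_mul _).const_mul _
  have hZ_le : ∫ ω, Z ω ≤ exp 1 * ((k : ℝ)⁻¹ * (n * C)) := by
    simp only [Z, integral_const_mul, integral_finsetSum _ fun i _ => hX_int i]
    gcongr
    simpa using sum_le_sum fun i (_ : i ∈ univ) => hX_le i
  have hpt : ∀ ω, √(1 / (k : ℝ) * ∑ i ∈ F, Y i ω ^ 2) ≤ log (Z ω) := fun ω => by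
    obtain ⟨σ, hσ, -⟩ := hY ω
    have hF_ne : F.Nonempty := by rw [← card_pos, hF]; omega
    rw [log_mul (exp_ne_zero 1) (hS_pos ω).ne', log_exp]
    simpa [hσ, hF] using sqrt_mean_sq_comp_perm_le hF_ne (hX · ω) σ
  calc _ ≤ log (exp 1 * ((k : ℝ)⁻¹ * (n * C))) :=
        integral_le_log_of_le_log (by positivity) (fun _ => sqrt_nonneg _) hpt hZ_int hZ_pos hZ_le
    _ ≤ 4 * log (2 * ((k : ℝ)⁻¹ * (n * C))) := log_exp_one_mul_le_four_mul_log_two_mul ha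
    _ = 4 * log (2 * C * n / k) := by ring_nf
end

section
/- Let X₁, …, Xₙ be random variables with ‖X_i‖_{ψ₂} ≤ b, let (X_i*) be their non-increasing rearrangement, and 1 ≤ k ≤ n. Then E √((1/k) Σ_{i=1}^k (X_i*)²) ≤ c b √(log(2n/k)) for a universal constant c. -/
open MeasureTheory Real Finset

/-!
Put `W = (1/k) ∑_{i<k} (X_i*/b)²` and `S = (1/k) ∑_j exp((X_j/b)²)`. Jensen's inequality for `exp`
over the top `k` indices, followed by enlarging the sum to all `n` indices, gives `exp W ≤ S`
pointwise, while `E S ≤ 2n/k` by the ψ₂ hypothesis. Hence `√W ≤ √(log S)`, and since `√log` is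
concave, `√(log S)` lies below the tangent line of `√log` at `a = 2n/k`, an affine function of `S`.
Taking expectations gives `E √W ≤ √(log (2n/k))`, so `c = 1` works.
-/

theorem Real.exp_mean_le_mean_exp {ι : Type*} {s : Finset ι} (hs : s.Nonempty) (f : ι → ℝ) :
    exp ((#s : ℝ)⁻¹ * ∑ i ∈ s, f i) ≤ (#s : ℝ)⁻¹ * ∑ i ∈ s, exp (f i) := by
  have hcard : (0 : ℝ) < #s := by exact_mod_cast hs.card_pos
  simpa [Finset.mul_sum, smul_eq_mul] using
    convexOn_exp.map_sum_le (t := s) (w := fun _ => (#s : ℝ)⁻¹) (p := f)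
      (fun _ _ => by positivity) (by simp [hcard.ne']) (fun _ _ => Set.mem_univ _)

theorem Finset.sum_comp_equiv_le_sum_univ {ι κ M : Type*} [Fintype κ] [AddCommMonoid M]
    [PartialOrder M] [IsOrderedAddMonoid M] (e : ι ≃ κ) (s : Finset ι) {g : κ → M}
    (hg : ∀ j, 0 ≤ g j) : ∑ i ∈ s, g (e i) ≤ ∑ j, g j :=
  (sum_map s e.toEmbedding g).symm.trans_le (sum_le_univ_sum_of_nonneg hg)

theorem Real.exp_mean_comp_le_mean_exp_univ {ι κ : Type*} [Fintype κ] (e : ι ≃ κ)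
    {s : Finset ι} (hs : s.Nonempty) (f : κ → ℝ) :
    exp ((#s : ℝ)⁻¹ * ∑ i ∈ s, f (e i)) ≤ (#s : ℝ)⁻¹ * ∑ j, exp (f j) :=
  (exp_mean_le_mean_exp hs _).trans <| by
    gcongr
    exact sum_comp_equiv_le_sum_univ e s fun j => (exp_pos (f j)).le

/-- The right-hand side is the tangent line of `√log` at `a`, evaluated at `s`. -/
theorem Real.sqrt_le_sqrt_log_add_of_exp_le {a s w : ℝ} (ha : 1 < a) (hw : 0 ≤ w)
    (hws : exp w ≤ s) : √w ≤ √(log a) + (s / a - 1) / (2 * √(log a)) := by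
  have hL : 0 < √(log a) := sqrt_pos.mpr (log_pos ha)
  have hs : 0 < s := (exp_pos w).trans_le hws
  have hw_log : w ≤ log a + (s / a - 1) :=
    calc w = log (exp w) := (log_exp w).symm
      _ ≤ log s := log_le_log (exp_pos w) hws
      _ = log a + log (s / a) := by rw [log_div hs.ne' (by linarith), add_sub_cancel]
      _ ≤ log a + (s / a - 1) := by gcongr; exact log_le_sub_one_of_pos (by positivity)
  have am_gm : 2 * √(log a) * √w ≤ w + log a := by
    nlinarith [sq_sqrt hw, sq_sqrt (log_pos ha).le, sq_nonneg (√w - √(log a))]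
  rw [← sub_le_iff_le_add', le_div_iff₀ (by positivity)]
  nlinarith [sq_sqrt (log_pos ha).le]

theorem MeasureTheory.integral_sqrt_le_sqrt_log_of_exp_le {Ω : Type*} [MeasurableSpace Ω]
    {μ : Measure Ω} [IsProbabilityMeasure μ] {W S : Ω → ℝ} {a : ℝ} (ha : 1 < a)
    (hW : ∀ᵐ ω ∂μ, 0 ≤ W ω) (hS : Integrable S μ) (hWS : ∀ᵐ ω ∂μ, exp (W ω) ≤ S ω)
    (hSa : ∫ ω, S ω ∂μ ≤ a) : ∫ ω, √(W ω) ∂μ ≤ √(log a) := by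
  set L := √(log a)
  have hL : 0 < L := sqrt_pos.mpr (log_pos ha)
  have hslope : Integrable (fun ω => (S ω / a - 1) / (2 * L)) μ :=
    ((hS.div_const a).sub (integrable_const 1)).div_const _
  calc ∫ ω, √(W ω) ∂μ ≤ ∫ ω, L + (S ω / a - 1) / (2 * L) ∂μ := by
        refine integral_mono_of_nonneg (ae_of_all _ fun ω => sqrt_nonneg _)
          ((integrable_const L).add hslope) ?_
        filter_upwards [hW, hWS] with ω hWω hWSω
        exact sqrt_le_sqrt_log_add_of_exp_le ha hWω hWSω
    _ = L + ((∫ ω, S ω ∂μ) / a - 1) / (2 * L) := by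
        rw [integral_add (integrable_const L) hslope, integral_div,
          integral_sub (hS.div_const a) (integrable_const 1), integral_div]
        simp
    _ ≤ L := by
        have : (∫ ω, S ω ∂μ) / a ≤ 1 := (div_le_one (by linarith)).mpr hSa
        have : ((∫ ω, S ω ∂μ) / a - 1) / (2 * L) ≤ 0 :=
          div_nonpos_of_nonpos_of_nonneg (by linarith) (by positivity)
        linarith

/-- Order statistics of ψ₂ random variables: if `‖X_i‖_{ψ₂} ≤ b` (i.e.
`E exp((X_i/b)²) ≤ 2`) and `(Y i)` is the pointwise non-increasing rearrangement of
`(|X i|)`, then `E √((1/k) Σ_{i<k} (X_i*)²) ≤ c b √(log(2n/k))`. -/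
theorem psi2_order_statistics :
    ∃ c : ℝ, 0 < c ∧
      ∀ (Ω : Type) (mΩ : MeasureSpace Ω), IsProbabilityMeasure (volume : Measure Ω) →
      ∀ (n k : ℕ), 1 ≤ k → k ≤ n →
      ∀ (b : ℝ), 0 < b →
      ∀ (X Y : Fin n → Ω → ℝ),
        (∀ i, Measurable (X i)) →
        (∀ i, Integrable (fun ω => Real.exp ((X i ω / b) ^ 2))) →
        (∀ i, ∫ ω, Real.exp ((X i ω / b) ^ 2) ≤ 2) →
        (∀ ω, ∃ σ : Equiv.Perm (Fin n),
          (∀ i, Y i ω = |X (σ i) ω|) ∧ Antitone fun i => Y i ω) →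
        ∫ ω, Real.sqrt ((1 / (k : ℝ)) *
            ∑ i ∈ Finset.univ.filter (fun i : Fin n => (i : ℕ) < k), (Y i ω) ^ 2)
          ≤ c * b * Real.sqrt (Real.log (2 * n / k)) := by
  refine ⟨1, one_pos, ?_⟩
  intro Ω mΩ hprob n k hk hkn b hb X Y _ hXint hXexp hY
  set F := univ.filter fun i : Fin n => (i : ℕ) < k
  have hF : #F = k := by simp [F, Fin.card_filter_val_lt, hkn]
  have hk0 : (0 : ℝ) < k := by exact_mod_cast hk
  have ha : 1 < 2 * (n : ℝ) / k := by
    have : (k : ℝ) ≤ n := by exact_mod_cast hkn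
    rw [one_lt_div hk0]
    linarith
  have hmean : ∀ ω, exp ((1 / (k : ℝ)) * ∑ i ∈ F, (Y i ω / b) ^ 2)
      ≤ (1 / (k : ℝ)) * ∑ j, exp ((X j ω / b) ^ 2) := fun ω => by
    obtain ⟨σ, hσ, -⟩ := hY ω
    simp only [hσ, div_pow, sq_abs, one_div, ← hF]
    exact exp_mean_comp_le_mean_exp_univ σ (card_pos.mp (hF ▸ hk)) fun j => X j ω ^ 2 / b ^ 2
  have hS := (integrable_finsetSum univ fun j _ => hXint j).const_mul (1 / (k : ℝ))
  have hSa : ∫ ω, (1 / (k : ℝ)) * ∑ j, exp ((X j ω / b) ^ 2) ≤ 2 * n / k := by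
    rw [integral_const_mul, integral_finsetSum _ fun j _ => hXint j]
    calc _ ≤ 1 / (k : ℝ) * ∑ _j : Fin n, (2 : ℝ) := by gcongr with j; exact hXexp j
      _ = 2 * n / k := by rw [sum_const, card_univ, Fintype.card_fin, nsmul_eq_mul]; ring
  have hscale : ∀ ω, √((1 / (k : ℝ)) * ∑ i ∈ F, Y i ω ^ 2)
      = b * √((1 / (k : ℝ)) * ∑ i ∈ F, (Y i ω / b) ^ 2) := fun ω => by
    simp_rw [div_pow, ← sum_div, ← mul_div_assoc, sqrt_div' _ (sq_nonneg b), sqrt_sq hb.le]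
    field_simp
  simp only [hscale]
  rw [integral_const_mul, one_mul]
  gcongr
  exact integral_sqrt_le_sqrt_log_of_exp_le ha (ae_of_all _ fun ω => by positivity) hS
    (ae_of_all _ hmean) hSa
end

section
/- Let x and y be independent random vectors, each uniformly distributed on the unit sphere S^{n-1} ⊂ ℝⁿ. Then with probability at least 1 − e^{−c√n}, Σ_{i=1}^n x_i² y_i² ≤ C/n, for universal constants c, C. -/
/-!
Write `Z = ∑ᵢ xᵢ² yᵢ²`. Expanding `Z ^ k` over words `h : Fin k → Fin n` and integrating out `y`
gives `𝔼 Z ^ k = ∑_h M(h)²` with `M(h) = 𝔼 ∏ⱼ x_{h j}²`, while `∑_h M(h) = 𝔼 ‖x‖ ^ 2k = 1`.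
Rotation invariance makes `t ↦ 𝔼 ⟪t, x⟫ ^ 2k` a multiple of `‖t‖ ^ 2k`, and comparing coefficients
of these two polynomials shows that `M(h)` is proportional to `W(h) = ∏ᵢ (2aᵢ - 1)‼`, where `aᵢ`
counts the occurrences of `i` in `h`. Appending a letter `v` to `h` multiplies `W` by `2aᵥ + 1`, so
`∑ W² ≤ (n + 4k²) ^ k`, while `∑ W ≥ n ^ k`. Hence `𝔼 Z ^ k = ∑ W² / (∑ W)² ≤ (2 / n) ^ k`
as soon as `4k² ≤ n`, and Markov's inequality with `k ≈ √n / 2` gives `ℙ(Z > 128 / n) ≤ 64 ^ (-k) ≤ e ^ (-√n)`.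
-/

open MeasureTheory Real Finset
open scoped Nat RealInnerProductSpace

namespace SphereCoordinates

section Words

variable {ι : Type*} {k : ℕ}

noncomputable def occurrences (h : Fin k → ι) : ι →₀ ℕ := ∑ j, Finsupp.single (h j) 1

lemma occurrences_cons (v : ι) (g : Fin k → ι) :
    occurrences (Fin.cons v g : Fin (k + 1) → ι) = Finsupp.single v 1 + occurrences g := by
  simp [occurrences, Fin.sum_univ_succ]

lemma prod_occurrences {M : Type*} [CommMonoid M] (h : Fin k → ι) (f : ι → M) :
    (occurrences h).prod (fun i m => f i ^ m) = ∏ j, f (h j) := by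
  rw [occurrences, ← Finsupp.prod_finsetSum_index (fun _ => pow_zero _) (fun _ _ _ => pow_add ..)]
  simp

variable [Fintype ι]

lemma sum_occurrences [DecidableEq ι] (h : Fin k → ι) : ∑ i, occurrences h i = k := by
  simp only [occurrences, Finsupp.finsetSum_apply, Finsupp.single_apply]
  rw [Finset.sum_comm]
  simp

/-- A zero entry contributes `(2 * 0 - 1)‼ = 0‼ = 1` (truncated subtraction), matching the
convention `(-1)‼ = 1`. -/
def oddWeight (a : ι →₀ ℕ) : ℕ := ∏ i, (2 * a i - 1)‼

lemma one_le_oddWeight (a : ι →₀ ℕ) : 1 ≤ oddWeight a :=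
  Finset.one_le_prod' fun _ _ => Nat.one_le_iff_ne_zero.2 (Nat.doubleFactorial_pos _).ne'

lemma oddWeight_single_add [DecidableEq ι] (v : ι) (a : ι →₀ ℕ) :
    oddWeight (Finsupp.single v 1 + a) = (2 * a v + 1) * oddWeight a := by
  rw [oddWeight, oddWeight, Fintype.prod_eq_mul_prod_compl v, Fintype.prod_eq_mul_prod_compl v,
    ← mul_assoc]
  congr 1
  · simp [show 2 * (1 + a v) - 1 = 2 * a v + 1 by omega, Nat.doubleFactorial_add_one]
  · refine Finset.prod_congr rfl fun i hi => ?_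
    have : v ≠ i := fun h => by simp [h] at hi
    simp [this]

lemma factorial_two_mul (m : ℕ) : (2 * m)! = 2 ^ m * m ! * (2 * m - 1)‼ := by
  rcases m with _ | m
  · rfl
  rw [show 2 * (m + 1) = (2 * m + 1) + 1 by ring, Nat.factorial_eq_mul_doubleFactorial,
    ← show 2 * (m + 1) = (2 * m + 1) + 1 by ring, Nat.doubleFactorial_two_mul]
  simp [show 2 * (m + 1) - 1 = 2 * m + 1 by omega]

lemma prod_factorial_two_mul (a : ι →₀ ℕ) :
    ∏ i, (2 * a i)! = 2 ^ (∑ i, a i) * (∏ i, (a i)!) * oddWeight a := by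
  simp only [factorial_two_mul, Finset.prod_mul_distrib, Finset.prod_pow_eq_pow_sum, oddWeight]

lemma multinomial_two_nsmul_mul (a : ι →₀ ℕ) :
    (2 • a).multinomial * (2 ^ (∑ i, a i) * (∑ i, a i)! * oddWeight a)
      = a.multinomial * (2 * ∑ i, a i)! := by
  have h2 := Nat.multinomial_spec univ ⇑(2 • a)
  have h1 := Nat.multinomial_spec univ a
  simp only [Finsupp.coe_smul, Pi.smul_apply, smul_eq_mul, ← Finset.mul_sum,
    prod_factorial_two_mul] at h2
  rw [Finsupp.multinomial_eq_of_support_subset (subset_univ _),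
    Finsupp.multinomial_eq_of_support_subset (subset_univ _), Finsupp.coe_smul]
  apply Nat.eq_of_mul_eq_mul_left (Finset.prod_pos fun i _ => (a i).factorial_pos)
  rw [← h2, ← h1]
  ring

lemma sum_sq_two_mul_add_one_le (a : ι → ℕ) :
    ∑ i, (2 * a i + 1) ^ 2 ≤ Fintype.card ι + 4 * (∑ i, a i) ^ 2 + 4 * ∑ i, a i := by
  have hsq : ∑ i, a i ^ 2 ≤ (∑ i, a i) ^ 2 := sum_sq_le_sq_sum_of_nonneg fun _ _ => Nat.zero_le _
  have hexp : ∑ i, (2 * a i + 1) ^ 2 = 4 * ∑ i, a i ^ 2 + 4 * ∑ i, a i + Fintype.card ι := by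
    simp only [mul_sum, ← card_univ, card_eq_sum_ones, ← sum_add_distrib]
    exact Finset.sum_congr rfl fun _ _ => by ring
  omega

lemma sum_oddWeight_sq_le [DecidableEq ι] (m : ℕ) :
    ∑ h : Fin m → ι, oddWeight (occurrences h) ^ 2 ≤ (Fintype.card ι + 4 * m ^ 2) ^ m := by
  induction m with
  | zero => simp [oddWeight, occurrences]
  | succ m ih =>
    rw [← (Fin.consEquiv fun _ => ι).sum_comp, Fintype.sum_prod_type, Finset.sum_comm]
    calc ∑ g : Fin m → ι, ∑ v, oddWeight (occurrences (Fin.cons v g : Fin (m + 1) → ι)) ^ 2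
        = ∑ g : Fin m → ι,
            (∑ v, (2 * occurrences g v + 1) ^ 2) * oddWeight (occurrences g) ^ 2 := by
          simp only [occurrences_cons, oddWeight_single_add, Finset.sum_mul, mul_pow]
      _ ≤ ∑ g : Fin m → ι, (Fintype.card ι + 4 * (m + 1) ^ 2) * oddWeight (occurrences g) ^ 2 := by
          gcongr with g
          have := sum_sq_two_mul_add_one_le (occurrences g)
          rw [sum_occurrences] at this
          nlinarith
      _ ≤ (Fintype.card ι + 4 * (m + 1) ^ 2) * (Fintype.card ι + 4 * (m + 1) ^ 2) ^ m := by
          rw [← Finset.mul_sum]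
          exact Nat.mul_le_mul_left _ (ih.trans (by gcongr; omega))
      _ = (Fintype.card ι + 4 * (m + 1) ^ 2) ^ (m + 1) := (pow_succ' _ _).symm

lemma pow_card_le_sum_oddWeight (m : ℕ) :
    Fintype.card ι ^ m ≤ ∑ h : Fin m → ι, oddWeight (occurrences h) := by
  simpa using Finset.card_nsmul_le_sum (univ : Finset (Fin m → ι)) _ 1
    fun h _ => one_le_oddWeight (occurrences h)

end Words

section RotationInvariance

variable {E : Type*} [NormedAddCommGroup E] [InnerProductSpace ℝ E] [MeasurableSpace E]
  [BorelSpace E] {μ : Measure E}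

lemma integral_comp_inner_eq_of_norm_eq (hinv : ∀ g : E ≃ₗᵢ[ℝ] E, μ.map g = μ) (f : ℝ → ℝ)
    {u v : E} (huv : ‖u‖ = ‖v‖) : ∫ x, f ⟪u, x⟫ ∂μ = ∫ x, f ⟪v, x⟫ ∂μ := by
  set R := (ℝ ∙ (u - v))ᗮ.reflection
  calc ∫ x, f ⟪u, x⟫ ∂μ = ∫ x, f ⟪R u, R x⟫ ∂μ := by simp only [LinearIsometryEquiv.inner_map_map]
    _ = ∫ x, f ⟪v, x⟫ ∂μ.map R := by
      rw [Submodule.reflection_sub huv]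
      exact (integral_map_equiv R.toMeasurableEquiv fun x => f ⟪v, x⟫).symm
    _ = ∫ x, f ⟪v, x⟫ ∂μ := by rw [hinv]

lemma integral_inner_pow (hinv : ∀ g : E ≃ₗᵢ[ℝ] E, μ.map g = μ) {u : E} (hu : ‖u‖ = 1)
    (t : E) (m : ℕ) : ∫ x, ⟪t, x⟫ ^ m ∂μ = ‖t‖ ^ m * ∫ x, ⟪u, x⟫ ^ m ∂μ := by
  rw [← integral_const_mul,
    integral_comp_inner_eq_of_norm_eq hinv (· ^ m) (by rw [norm_smul, hu, mul_one, norm_norm] :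
      ‖t‖ = ‖‖t‖ • u‖)]
  simp only [inner_smul_left, mul_pow, conj_trivial]

end RotationInvariance

lemma sum_sq_mul_sq_le {ι : Type*} [Fintype ι] (x y : EuclideanSpace ℝ ι) :
    ∑ i, x i ^ 2 * y i ^ 2 ≤ ‖x‖ ^ 2 * ‖y‖ ^ 2 := by
  rw [EuclideanSpace.real_norm_sq_eq x, sum_mul]
  refine Finset.sum_le_sum fun i _ => mul_le_mul_of_nonneg_left ?_ (sq_nonneg _)
  simpa using pow_le_pow_left₀ (norm_nonneg _) (PiLp.norm_apply_le y i) 2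

variable {n : ℕ} {σ : Measure (EuclideanSpace ℝ (Fin n))}

lemma ae_norm_eq_one (hsph : σ (Metric.sphere 0 1)ᶜ = 0) : ∀ᵐ x ∂σ, ‖x‖ = 1 := by
  filter_upwards [mem_ae_iff.2 hsph] with x hx
  simpa using hx

lemma integrable_prod_apply_pow [IsFiniteMeasure σ] (hsph : σ (Metric.sphere 0 1)ᶜ = 0) {m : ℕ}
    (F : Fin m → Fin n) (e : ℕ) : Integrable (fun x => ∏ j, x (F j) ^ e) σ := by
  refine (integrable_const (1 : ℝ)).mono' (Measurable.aestronglyMeasurable (by fun_prop)) ?_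
  filter_upwards [ae_norm_eq_one hsph] with x hx
  rw [norm_prod]
  refine Finset.prod_le_one (fun _ _ => norm_nonneg _) fun j _ => ?_
  rw [norm_pow]
  exact pow_le_one₀ (norm_nonneg _) (hx ▸ PiLp.norm_apply_le x (F j))

section MomentPolynomial

open MvPolynomial

/-- The polynomial `∫ (∑ i, x i • X i) ^ m ∂σ`, expanded over words so that it is defined
coefficientwise. -/
noncomputable def momentPolynomial (σ : Measure (EuclideanSpace ℝ (Fin n))) (m : ℕ) :
    MvPolynomial (Fin n) ℝ :=
  ∑ F : Fin m → Fin n, (∫ x, ∏ j, x (F j) ∂σ) • ∏ j, X (F j)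

lemma map_momentPolynomial [IsFiniteMeasure σ] (hsph : σ (Metric.sphere 0 1)ᶜ = 0) (m : ℕ)
    (L : MvPolynomial (Fin n) ℝ →ₗ[ℝ] ℝ) :
    L (momentPolynomial σ m) = ∫ x, L ((∑ i, x i • X i) ^ m) ∂σ := by
  have hpow : ∀ x : EuclideanSpace ℝ (Fin n),
      (∑ i, x i • X i : MvPolynomial (Fin n) ℝ) ^ m
        = ∑ F : Fin m → Fin n, (∏ j, x (F j)) • ∏ j, X (F j) := by
    simp [Fintype.sum_pow, smul_eq_C_mul, prod_mul_distrib]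
  simp only [hpow, momentPolynomial, map_sum, map_smul, smul_eq_mul]
  rw [integral_finsetSum _ fun F _ => (by simpa using integrable_prod_apply_pow hsph F 1 :
    Integrable (fun x => ∏ j, x (F j)) σ).mul_const _]
  simp only [integral_mul_const]

lemma eval_momentPolynomial [IsFiniteMeasure σ] (hsph : σ (Metric.sphere 0 1)ᶜ = 0) (m : ℕ)
    (t : Fin n → ℝ) : eval t (momentPolynomial σ m) = ∫ x, ⟪WithLp.toLp 2 t, x⟫ ^ m ∂σ := by
  rw [← coe_aeval_eq_eval, AlgHom.coe_toRingHom, ← AlgHom.toLinearMap_apply,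
    map_momentPolynomial hsph]
  simp [PiLp.inner_apply, mul_comm]

lemma coeff_momentPolynomial [IsFiniteMeasure σ] (hsph : σ (Metric.sphere 0 1)ᶜ = 0)
    {m : ℕ} {s : Fin n →₀ ℕ} (hs : s.sum (fun _ e => e) = m) :
    coeff s (momentPolynomial σ m) = s.multinomial * ∫ x, ∏ i, x i ^ s i ∂σ := by
  rw [← lcoeff_apply ℝ, map_momentPolynomial hsph]
  simp [coeff_linearCombination_X_pow_of_fintype, hs, Finsupp.prod_fintype, integral_const_mul]

lemma momentPolynomial_two_mul [IsFiniteMeasure σ] (hsph : σ (Metric.sphere 0 1)ᶜ = 0)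
    (hinv : ∀ g : EuclideanSpace ℝ (Fin n) ≃ₗᵢ[ℝ] _, σ.map g = σ)
    {u : EuclideanSpace ℝ (Fin n)} (hu : ‖u‖ = 1) (k : ℕ) :
    momentPolynomial σ (2 * k) = C (∫ x, ⟪u, x⟫ ^ (2 * k) ∂σ) * expand 2 ((∑ i, X i) ^ k) := by
  refine MvPolynomial.funext fun t => ?_
  rw [eval_momentPolynomial hsph, integral_inner_pow hinv hu, pow_mul,
    EuclideanSpace.real_norm_sq_eq]
  simp [mul_comm]

/-- Comparing the coefficients of `X ^ (2 • a)` in `momentPolynomial_two_mul`. -/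
lemma multinomial_mul_integral_prod_pow [IsFiniteMeasure σ]
    (hsph : σ (Metric.sphere 0 1)ᶜ = 0)
    (hinv : ∀ g : EuclideanSpace ℝ (Fin n) ≃ₗᵢ[ℝ] _, σ.map g = σ)
    {u : EuclideanSpace ℝ (Fin n)} (hu : ‖u‖ = 1) (a : Fin n →₀ ℕ) :
    (2 • a).multinomial * ∫ x, ∏ i, x i ^ (2 * a i) ∂σ
      = (∫ x, ⟪u, x⟫ ^ (2 * ∑ i, a i) ∂σ) * a.multinomial := by
  have hcoeff := congrArg (coeff (2 • a)) (momentPolynomial_two_mul hsph hinv hu (∑ i, a i))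
  rw [coeff_momentPolynomial hsph (by simp [Finsupp.sum_fintype, Finset.mul_sum]), coeff_C_mul,
    coeff_expand_smul _ two_ne_zero, coeff_sum_X_pow_of_fintype,
    if_pos (by simp [Finsupp.sum_fintype])] at hcoeff
  simpa using hcoeff

end MomentPolynomial

lemma exists_integral_prod_sq_eq_mul_oddWeight [IsFiniteMeasure σ] (hn : 0 < n)
    (hsph : σ (Metric.sphere 0 1)ᶜ = 0)
    (hinv : ∀ g : EuclideanSpace ℝ (Fin n) ≃ₗᵢ[ℝ] _, σ.map g = σ)
    (k : ℕ) : ∃ c : ℝ, ∀ h : Fin k → Fin n,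
      ∫ x, ∏ j, x (h j) ^ 2 ∂σ = c * oddWeight (occurrences h) := by
  set u : EuclideanSpace ℝ (Fin n) := EuclideanSpace.single ⟨0, hn⟩ 1
  have hu : ‖u‖ = 1 := by simp [u]
  set c := ∫ x, ⟪u, x⟫ ^ (2 * k) ∂σ
  refine ⟨c * 2 ^ k * k ! / (2 * k)!, fun h => ?_⟩
  set a := occurrences h
  have hk : ∑ i, a i = k := sum_occurrences h
  have hmoment : ∫ x, ∏ j, x (h j) ^ 2 ∂σ = ∫ x, ∏ i, x i ^ (2 * a i) ∂σ := by
    congr 1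
    ext x
    rw [← prod_occurrences h (fun i => x i ^ 2), Finsupp.prod_fintype _ _ fun _ => pow_zero _]
    simp only [a, pow_mul]
  have h1 := multinomial_mul_integral_prod_pow hsph hinv hu a
  have h2 : ((2 • a).multinomial : ℝ) * (2 ^ k * k ! * oddWeight a) = a.multinomial * (2 * k)! := by
    exact_mod_cast hk ▸ multinomial_two_nsmul_mul a
  rw [hk, ← hmoment] at h1
  have hpos : (0 : ℝ) < a.multinomial := by
    rw [Finsupp.multinomial_eq_of_support_subset (subset_univ _)]
    exact_mod_cast Nat.multinomial_pos _ _
  rw [div_mul_eq_mul_div, eq_div_iff (by positivity), ← mul_left_cancel_iff_of_pos hpos]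
  linear_combination (2 ^ k * k ! * (oddWeight a : ℝ)) * h1 - (∫ x, ∏ j, x (h j) ^ 2 ∂σ) * h2

lemma sum_integral_prod_sq [IsProbabilityMeasure σ] (hsph : σ (Metric.sphere 0 1)ᶜ = 0) (k : ℕ) :
    ∑ h : Fin k → Fin n, ∫ x, ∏ j, x (h j) ^ 2 ∂σ = 1 := by
  rw [← integral_finsetSum _ fun h _ => integrable_prod_apply_pow hsph h 2]
  have hexpand : ∀ x : EuclideanSpace ℝ (Fin n),
      ∑ h : Fin k → Fin n, ∏ j, x (h j) ^ 2 = (∑ i, x i ^ 2) ^ k :=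
    fun x => (Fintype.sum_pow (fun i => x i ^ 2) k).symm
  simp_rw [hexpand]
  rw [integral_congr_ae (g := fun _ => 1), integral_const, probReal_univ, one_smul]
  filter_upwards [ae_norm_eq_one hsph] with x hx
  rw [← EuclideanSpace.real_norm_sq_eq, hx, one_pow, one_pow]

lemma integral_sum_sq_mul_sq_pow [IsFiniteMeasure σ] (hsph : σ (Metric.sphere 0 1)ᶜ = 0)
    (k : ℕ) : ∫ p, (∑ i, p.1 i ^ 2 * p.2 i ^ 2) ^ k ∂σ.prod σ
      = ∑ h : Fin k → Fin n, (∫ x, ∏ j, x (h j) ^ 2 ∂σ) ^ 2 := by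
  simp_rw [Fintype.sum_pow, prod_mul_distrib]
  rw [integral_finsetSum _ fun h _ =>
    (integrable_prod_apply_pow hsph h 2).mul_prod (integrable_prod_apply_pow hsph h 2)]
  exact Finset.sum_congr rfl fun h _ => (integral_prod_mul (L := ℝ)
    (fun x : EuclideanSpace ℝ (Fin n) => ∏ j, x (h j) ^ 2) _).trans (sq _).symm

lemma integral_sum_sq_mul_sq_pow_le [IsProbabilityMeasure σ] (hsph : σ (Metric.sphere 0 1)ᶜ = 0)
    (hinv : ∀ g : EuclideanSpace ℝ (Fin n) ≃ₗᵢ[ℝ] _, σ.map g = σ) (hn : 0 < n) {k : ℕ}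
    (hk : 4 * k ^ 2 ≤ n) :
    ∫ p, (∑ i, p.1 i ^ 2 * p.2 i ^ 2) ^ k ∂σ.prod σ ≤ (2 / n) ^ k := by
  obtain ⟨c, hc⟩ := exists_integral_prod_sq_eq_mul_oddWeight hn hsph hinv k
  set S : ℝ := ∑ h : Fin k → Fin n, (oddWeight (occurrences h) : ℝ)
  set S₂ : ℝ := ∑ h : Fin k → Fin n, (oddWeight (occurrences h) : ℝ) ^ 2
  have hcS : c * S = 1 := by
    rw [← sum_integral_prod_sq hsph k, mul_sum]
    exact Finset.sum_congr rfl fun h _ => (hc h).symm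
  have hS : (n : ℝ) ^ k ≤ S := by
    have h := pow_card_le_sum_oddWeight (ι := Fin n) k
    rw [Fintype.card_fin] at h
    simp only [S]
    exact_mod_cast h
  have hS₂ : S₂ ≤ (2 * n) ^ k := by
    have h := sum_oddWeight_sq_le (ι := Fin n) k
    rw [Fintype.card_fin] at h
    calc S₂ ≤ ((n + 4 * k ^ 2 : ℕ) : ℝ) ^ k := by simp only [S₂]; exact_mod_cast h
      _ ≤ (2 * n) ^ k := by gcongr; exact_mod_cast (by omega : n + 4 * k ^ 2 ≤ 2 * n)
  have hnk : (0 : ℝ) < n ^ k := by positivity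
  calc ∫ p, (∑ i, p.1 i ^ 2 * p.2 i ^ 2) ^ k ∂σ.prod σ = S₂ / S ^ 2 := by
        rw [integral_sum_sq_mul_sq_pow hsph, eq_div_iff (pow_ne_zero 2 (hnk.trans_le hS).ne')]
        simp only [hc, mul_pow, ← mul_sum]
        linear_combination S₂ * (c * S + 1) * hcS
    _ ≤ (2 * n) ^ k / (n ^ k) ^ 2 := div_le_div₀ (by positivity) hS₂ (by positivity) (by gcongr)
    _ = (2 / n) ^ k := by
        rw [mul_pow, sq, ← div_div, mul_div_cancel_right₀ _ hnk.ne', div_pow]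

lemma ae_sum_sq_mul_sq_le_one [IsFiniteMeasure σ] (hsph : σ (Metric.sphere 0 1)ᶜ = 0) :
    ∀ᵐ p ∂σ.prod σ, ∑ i, p.1 i ^ 2 * p.2 i ^ 2 ≤ 1 := by
  filter_upwards [Measure.quasiMeasurePreserving_fst.ae (ae_norm_eq_one hsph),
    Measure.quasiMeasurePreserving_snd.ae (ae_norm_eq_one hsph)] with p h₁ h₂
  simpa [h₁, h₂] using sum_sq_mul_sq_le p.1 p.2

lemma measureReal_lt_sum_sq_mul_sq_le [IsProbabilityMeasure σ]
    (hsph : σ (Metric.sphere 0 1)ᶜ = 0)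
    (hinv : ∀ g : EuclideanSpace ℝ (Fin n) ≃ₗᵢ[ℝ] _, σ.map g = σ) (hn : 0 < n) {k : ℕ}
    (hk : 4 * k ^ 2 ≤ n) {C : ℝ} (hC : 0 < C) :
    (σ.prod σ).real {p | C / n < ∑ i, p.1 i ^ 2 * p.2 i ^ 2} ≤ (2 / C) ^ k := by
  set Z := fun p : EuclideanSpace ℝ (Fin n) × EuclideanSpace ℝ (Fin n) => ∑ i, p.1 i ^ 2 * p.2 i ^ 2
  have hε : (0 : ℝ) < (C / n) ^ k := by positivity
  have hint : Integrable (fun p => Z p ^ k) (σ.prod σ) := by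
    refine (integrable_const (1 : ℝ)).mono' (Measurable.aestronglyMeasurable (by fun_prop)) ?_
    filter_upwards [ae_sum_sq_mul_sq_le_one hsph] with p hp
    rw [norm_pow, Real.norm_of_nonneg (by positivity)]
    exact pow_le_one₀ (by positivity) hp
  have hmarkov := mul_meas_ge_le_integral_of_nonneg
    (Filter.Eventually.of_forall fun p => by positivity : 0 ≤ᵐ[σ.prod σ] fun p => Z p ^ k) hint
    ((C / n) ^ k)
  calc (σ.prod σ).real {p | C / n < Z p} ≤ (σ.prod σ).real {p | (C / n) ^ k ≤ Z p ^ k} :=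
        measureReal_mono fun p hp => pow_le_pow_left₀ (by positivity : (0 : ℝ) ≤ C / n) hp.le k
    _ ≤ (2 / n) ^ k / (C / n) ^ k := by
        rw [le_div_iff₀ hε, mul_comm]
        exact hmarkov.trans (integral_sum_sq_mul_sq_pow_le hsph hinv hn hk)
    _ = (2 / C) ^ k := by rw [← div_pow]; congr 1; field_simp

lemma two_div_128_pow_le_exp {n : ℕ} (hn : 16 ≤ n) :
    (2 / 128 : ℝ) ^ (Nat.sqrt n / 2) ≤ exp (-√n) := by
  set s := Nat.sqrt n
  have hs : 4 ≤ s := Nat.le_sqrt.2 hn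
  have hsqrt : √n < s + 1 := by
    rw [Real.sqrt_lt' (by positivity)]
    exact_mod_cast Nat.lt_succ_sqrt' n
  have hk : (s : ℝ) + 1 ≤ 4 * (s / 2 : ℕ) := by
    have := Nat.lt_mul_div_succ s two_pos
    exact_mod_cast (by omega : s + 1 ≤ 4 * (s / 2))
  have hexp : exp 4 ≤ 64 :=
    calc exp 4 = exp 1 ^ 4 := by rw [← exp_nat_mul]; norm_num
      _ ≤ 2.7182818286 ^ 4 := pow_le_pow_left₀ (exp_pos 1).le exp_one_lt_d9.le 4
      _ ≤ 64 := by norm_num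
  calc (2 / 128 : ℝ) ^ (s / 2) ≤ exp (-4) ^ (s / 2) := by
        gcongr
        rw [exp_neg, show (2 / 128 : ℝ) = 64⁻¹ by norm_num]
        exact inv_anti₀ (exp_pos 4) hexp
    _ = exp (-(4 * (s / 2 : ℕ))) := by rw [← exp_nat_mul]; ring_nf
    _ ≤ exp (-√n) := by gcongr; linarith

lemma measureReal_lt_sum_sq_mul_sq_le_exp [IsProbabilityMeasure σ]
    (hsph : σ (Metric.sphere 0 1)ᶜ = 0)
    (hinv : ∀ g : EuclideanSpace ℝ (Fin n) ≃ₗᵢ[ℝ] _, σ.map g = σ) (hn : 0 < n) :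
    (σ.prod σ).real {p | 128 / n < ∑ i, p.1 i ^ 2 * p.2 i ^ 2} ≤ exp (-√n) := by
  by_cases hsmall : n ≤ 128
  · have hnull : σ.prod σ {p | 128 / n < ∑ i, p.1 i ^ 2 * p.2 i ^ 2} = 0 := by
      simp only [← not_le]
      refine ae_iff.1 ?_
      filter_upwards [ae_sum_sq_mul_sq_le_one hsph] with p hp
      refine hp.trans ?_
      rw [le_div_iff₀ (by positivity), one_mul]
      exact_mod_cast hsmall
    rw [measureReal_def, hnull, ENNReal.toReal_zero]
    positivity
  · have hk : 4 * (Nat.sqrt n / 2) ^ 2 ≤ n := by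
      calc 4 * (Nat.sqrt n / 2) ^ 2 = (2 * (Nat.sqrt n / 2)) ^ 2 := by ring
        _ ≤ Nat.sqrt n ^ 2 := Nat.pow_le_pow_left (Nat.mul_div_le _ 2) 2
        _ ≤ n := Nat.sqrt_le' n
    exact (measureReal_lt_sum_sq_mul_sq_le hsph hinv hn hk (by norm_num)).trans
      (two_div_128_pow_le_exp (by omega))

end SphereCoordinates

open SphereCoordinates in
/-- If `x, y` are independent uniform random vectors on `S^{n-1}` then, with probability
at least `1 − e^{−c√n}`, one has `Σ_i x_i² y_i² ≤ C/n`. -/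
theorem sphere_coordinate_product_bound :
    ∃ c C : ℝ, 0 < c ∧ 0 < C ∧
      ∀ (n : ℕ) (σ : Measure (EuclideanSpace ℝ (Fin n))), IsProbabilityMeasure σ →
        σ (Metric.sphere (0 : EuclideanSpace ℝ (Fin n)) 1)ᶜ = 0 →
        (∀ g : EuclideanSpace ℝ (Fin n) ≃ₗᵢ[ℝ] EuclideanSpace ℝ (Fin n),
          Measure.map g σ = σ) →
        1 - Real.exp (-c * Real.sqrt n) ≤
          ((σ.prod σ) {p : EuclideanSpace ℝ (Fin n) × EuclideanSpace ℝ (Fin n) |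
              ∑ i, (p.1 i) ^ 2 * (p.2 i) ^ 2 ≤ C / n}).toReal := by
  refine ⟨1, 128, one_pos, by norm_num, fun n σ _ hsph hinv => ?_⟩
  rcases Nat.eq_zero_or_pos n with rfl | hn
  · simp
  have hS : MeasurableSet {p : EuclideanSpace ℝ (Fin n) × EuclideanSpace ℝ (Fin n) |
      ∑ i, p.1 i ^ 2 * p.2 i ^ 2 ≤ 128 / n} := measurableSet_le (by fun_prop) measurable_const
  have hcompl := probReal_compl_eq_one_sub (μ := σ.prod σ) hS
  simp only [Set.compl_ofPred, not_le] at hcompl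
  rw [← measureReal_def, neg_mul, one_mul]
  linarith [measureReal_lt_sum_sq_mul_sq_le_exp hsph hinv hn]
end

section
/- Let e₁,…,eₙ be orthonormal and Q = √n · conv{±e₁,…,±eₙ}. Let {u₁,…,uₙ} be an orthonormal basis with |⟨u_i, e_j⟩| ≤ δ for all i, j. Then the body Q̃ obtained from Q by Minkowski symmetrizations with respect to u₁,…,u_{n−1} satisfies h_{Q̃}(x) ≤ c √n δ log(2n) |x| for all x, where c is a universal constant. -/
open Real Pointwise

noncomputable def reflV {E : Type*} [NormedAddCommGroup E] [InnerProductSpace ℝ E]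
    (u x : E) : E := x - (2 * (inner ℝ x u : ℝ)) • u

noncomputable def suppFn {E : Type*} [NormedAddCommGroup E] [InnerProductSpace ℝ E]
    (K : Set E) (x : E) : ℝ := sSup ((fun y => (inner ℝ x y : ℝ)) '' K)

/-- Minkowski symmetrization of `K` with respect to `u`. -/
noncomputable def msymm {E : Type*} [NormedAddCommGroup E] [InnerProductSpace ℝ E]
    (u : E) (K : Set E) : Set E := (2⁻¹ : ℝ) • (reflV u '' K + K)

open RealInnerProductSpace

section Helpers
variable {E : Type*} [NormedAddCommGroup E] [InnerProductSpace ℝ E]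

lemma inner_cont (x : E) : Continuous fun y : E => (inner ℝ x y : ℝ) :=
  continuous_const.inner continuous_id

lemma inner_reflV (v x y : E) : ⟪x, reflV v y⟫ = ⟪reflV v x, y⟫ := by
  simp only [reflV, inner_sub_left, inner_sub_right, real_inner_smul_left,
    real_inner_smul_right, real_inner_comm x v, real_inner_comm y v]
  ring

lemma reflV_cont (v : E) : Continuous (reflV v) := by
  unfold reflV
  exact continuous_id.sub ((continuous_const.mul (continuous_id.inner continuous_const)).smul
    continuous_const)

lemma msymm_isCompact (v : E) {K : Set E} (h : IsCompact K) : IsCompact (msymm v K) :=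
  ((h.image (reflV_cont v)).add h).smul _

lemma msymm_nonempty (v : E) {K : Set E} (h : K.Nonempty) : (msymm v K).Nonempty :=
  ((h.image _).add h).smul_set

lemma suppFn_le {K : Set E} {x : E} {M : ℝ} (hne : K.Nonempty)
    (h : ∀ y ∈ K, (inner ℝ x y : ℝ) ≤ M) : suppFn K x ≤ M :=
  csSup_le (hne.image _) (by rintro _ ⟨y, hy, rfl⟩; exact h y hy)

lemma le_suppFn {K : Set E} (hK : IsCompact K) {x y : E} (hy : y ∈ K) :
    (inner ℝ x y : ℝ) ≤ suppFn K x :=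
  le_csSup ((hK.image (inner_cont x)).bddAbove) ⟨y, hy, rfl⟩

lemma suppFn_msymm_le (v : E) {K : Set E} (hne : K.Nonempty) (hK : IsCompact K) (x : E) :
    suppFn (msymm v K) x ≤ (suppFn K (reflV v x) + suppFn K x) / 2 := by
  apply suppFn_le (msymm_nonempty v hne)
  rintro y hy
  obtain ⟨w, hw, rfl⟩ := hy
  obtain ⟨z, ⟨z1, hz1, rfl⟩, z2, hz2, rfl⟩ := hw
  have h1 : ⟪x, reflV v z1⟫ ≤ suppFn K (reflV v x) := by
    rw [inner_reflV]; exact le_suppFn hK hz1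
  have h2 : ⟪x, z2⟫ ≤ suppFn K x := le_suppFn hK hz2
  rw [real_inner_smul_right, inner_add_right]
  linarith
end Helpers

section FR
variable {E : Type*} [NormedAddCommGroup E] [InnerProductSpace ℝ E]

noncomputable def fR : ∀ {m : ℕ}, (Fin m → E) → (Fin m → Bool) → E → E
  | 0, _, _, x => x
  | _ + 1, g, ε, x =>
      if ε 0 then reflV (g 0) (fR (fun k => g k.succ) (fun k => ε k.succ) x)
      else fR (fun k => g k.succ) (fun k => ε k.succ) x

lemma suppFn_foldl_le : ∀ (m : ℕ) (g : Fin m → E) (K : Set E), K.Nonempty → IsCompact K →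
    ∀ x : E,
    suppFn ((List.ofFn g).foldl (fun S v => msymm v S) K) x
      ≤ (∑ ε : Fin m → Bool, suppFn K (fR g ε x)) / 2 ^ m := by
  intro m
  induction m with
  | zero =>
    intro g K hne hK x
    simp [fR, List.ofFn_zero, suppFn]
  | succ m ih =>
    intro g K hne hK x
    rw [List.ofFn_succ, List.foldl_cons]
    have h1 := ih (fun k => g k.succ) (msymm (g 0) K) (msymm_nonempty _ hne)
      (msymm_isCompact _ hK) x
    refine h1.trans ?_
    have h2 : ∀ ε : Fin m → Bool,
        suppFn (msymm (g 0) K) (fR (fun k => g k.succ) ε x)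
          ≤ (suppFn K (reflV (g 0) (fR (fun k => g k.succ) ε x))
              + suppFn K (fR (fun k => g k.succ) ε x)) / 2 :=
      fun ε => suppFn_msymm_le _ hne hK _
    have h3 : ∑ ε : Fin m → Bool, suppFn (msymm (g 0) K) (fR (fun k => g k.succ) ε x)
        ≤ ∑ ε : Fin m → Bool,
            (suppFn K (reflV (g 0) (fR (fun k => g k.succ) ε x))
              + suppFn K (fR (fun k => g k.succ) ε x)) / 2 :=
      Finset.sum_le_sum fun ε _ => h2 ε
    have h4 : ∑ ε : Fin (m + 1) → Bool, suppFn K (fR g ε x)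
        = ∑ ε : Fin m → Bool,
            (suppFn K (reflV (g 0) (fR (fun k => g k.succ) ε x))
              + suppFn K (fR (fun k => g k.succ) ε x)) := by
      rw [← (Fin.consEquiv fun _ => Bool).sum_comp fun ε => suppFn K (fR g ε x)]
      rw [Fintype.sum_prod_type]
      rw [Fintype.sum_bool]
      rw [← Finset.sum_add_distrib]
      refine Finset.sum_congr rfl fun ε _ => ?_
      have hc : ∀ b : Bool, fR g ((Fin.consEquiv fun _ => Bool) (b, ε)) x
          = if b then reflV (g 0) (fR (fun k => g k.succ) ε x)
            else fR (fun k => g k.succ) ε x := by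
        intro b
        show fR g (Fin.cons b ε) x = _
        simp only [fR, Fin.cons_zero, Fin.cons_succ]
      rw [hc true, hc false]
      simp
    rw [h4]
    calc (∑ ε : Fin m → Bool, suppFn (msymm (g 0) K) (fR (fun k => g k.succ) ε x)) / 2 ^ m
        ≤ (∑ ε : Fin m → Bool,
            (suppFn K (reflV (g 0) (fR (fun k => g k.succ) ε x))
              + suppFn K (fR (fun k => g k.succ) ε x)) / 2) / 2 ^ m := by
          apply div_le_div_of_nonneg_right h3 (by positivity) |>.trans_eq rfl
      _ = (∑ ε : Fin m → Bool,
            (suppFn K (reflV (g 0) (fR (fun k => g k.succ) ε x))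
              + suppFn K (fR (fun k => g k.succ) ε x))) / 2 ^ (m + 1) := by
          rw [← Finset.sum_div]
          ring

lemma fR_eq : ∀ {m : ℕ} (g : Fin m → E), (∀ k l, k ≠ l → ⟪g k, g l⟫ = 0) →
    ∀ (ε : Fin m → Bool) (x : E),
    fR g ε x = x - ∑ k, (if ε k then 2 * ⟪x, g k⟫ else 0) • g k := by
  intro m
  induction m with
  | zero => intro g _ ε x; simp [fR]
  | succ m ih =>
    intro g horth ε x
    have horth' : ∀ k l : Fin m, k ≠ l → ⟪g k.succ, g l.succ⟫ = 0 := fun k l h =>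
      horth _ _ (fun hc => h (Fin.succ_injective m hc))
    have hy := ih (fun k => g k.succ) horth' (fun k => ε k.succ) x
    have hinner : ⟪fR (fun k => g k.succ) (fun k => ε k.succ) x, g 0⟫ = ⟪x, g 0⟫ := by
      rw [hy, inner_sub_left, sum_inner]
      have : ∀ k : Fin m,
          ⟪(if ε k.succ then 2 * ⟪x, g k.succ⟫ else 0) • g k.succ, g 0⟫ = 0 := by
        intro k
        rw [real_inner_smul_left, horth _ _ (Fin.succ_ne_zero k), mul_zero]
      rw [Finset.sum_congr rfl fun k _ => this k]
      simp
    rw [Fin.sum_univ_succ]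
    show (if ε 0 then reflV (g 0) (fR (fun k => g k.succ) (fun k => ε k.succ) x)
      else fR (fun k => g k.succ) (fun k => ε k.succ) x) = _
    by_cases h0 : ε 0
    · rw [if_pos h0, if_pos h0, reflV, hinner, hy]
      abel
    · rw [if_neg h0, if_neg h0, hy]
      simp
end FR

lemma rad_mgf (m : ℕ) (c : Fin m → ℝ) (d t : ℝ) :
    ∑ ε : Fin m → Bool, Real.exp (t * ((∑ k, (if ε k then (-1 : ℝ) else 1) * c k) + d))
      ≤ 2 ^ m * Real.exp (t * d + t ^ 2 * (∑ k, c k ^ 2) / 2) := by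
  have key : ∀ ε : Fin m → Bool,
      Real.exp (t * ((∑ k, (if ε k then (-1 : ℝ) else 1) * c k) + d))
        = Real.exp (t * d) * ∏ k, Real.exp (t * ((if ε k then (-1 : ℝ) else 1) * c k)) := by
    intro ε
    rw [← Real.exp_sum, ← Real.exp_add]
    congr 1
    rw [mul_add, Finset.mul_sum, add_comm]
  calc ∑ ε : Fin m → Bool, Real.exp (t * ((∑ k, (if ε k then (-1 : ℝ) else 1) * c k) + d))
      = Real.exp (t * d) * ∑ ε : Fin m → Bool,
          ∏ k, Real.exp (t * ((if ε k then (-1 : ℝ) else 1) * c k)) := by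
        rw [Finset.mul_sum]
        exact Finset.sum_congr rfl fun ε _ => key ε
    _ = Real.exp (t * d) * ∏ k : Fin m,
          (∑ b : Bool, Real.exp (t * ((if b then (-1 : ℝ) else 1) * c k))) := by
        exact congrArg _
          (Fintype.prod_sum (κ := fun _ : Fin m => Bool)
            (fun k b => Real.exp (t * ((if b then (-1 : ℝ) else 1) * c k)))).symm
    _ ≤ Real.exp (t * d) * ∏ k : Fin m, 2 * Real.exp ((t * c k) ^ 2 / 2) := by
        refine mul_le_mul_of_nonneg_left ?_ (Real.exp_nonneg _)
        refine Finset.prod_le_prod (fun k _ => ?_) (fun k _ => ?_)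
        · positivity
        · rw [Fintype.sum_bool, if_pos rfl, if_neg (by simp),
            show t * (-1 * c k) = -(t * c k) by ring, show t * (1 * c k) = t * c k by ring,
            show Real.exp (-(t * c k)) + Real.exp (t * c k)
              = 2 * Real.cosh (t * c k) by rw [Real.cosh_eq]; ring]
          exact mul_le_mul_of_nonneg_left (Real.cosh_le_exp_half_sq _) (by norm_num)
    _ = 2 ^ m * Real.exp (t * d + t ^ 2 * (∑ k, c k ^ 2) / 2) := by
        rw [Finset.prod_mul_distrib, Finset.prod_const, Finset.card_univ, Fintype.card_fin,
          ← Real.exp_sum, Real.exp_add]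
        rw [show ∑ k : Fin m, (t * c k) ^ 2 / 2 = t ^ 2 * (∑ k, c k ^ 2) / 2 by
          rw [Finset.mul_sum, Finset.sum_div]; exact Finset.sum_congr rfl fun k _ => by ring]
        ring

lemma suppFn_cross_le {E : Type*} [NormedAddCommGroup E] [InnerProductSpace ℝ E]
    {n : ℕ} (e : Fin n → E) (r M : ℝ) (hr : 0 ≤ r) (hM : 0 ≤ M) (y : E)
    (h : ∀ j, |⟪y, e j⟫| ≤ M) :
    suppFn (r • convexHull ℝ (Set.range e ∪ Set.range fun j => -(e j))) y ≤ r * M := by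
  unfold suppFn
  apply Real.sSup_le _ (mul_nonneg hr hM)
  rintro _ ⟨z, hz, rfl⟩
  obtain ⟨w, hw, rfl⟩ := hz
  show (⟪y, r • w⟫ : ℝ) ≤ r * M
  rw [real_inner_smul_right]
  have hlin : IsLinearMap ℝ fun w : E => ⟪y, w⟫ :=
    ⟨fun a b => inner_add_right y a b, fun c a => by
      simp [real_inner_smul_right]⟩
  have hsub : convexHull ℝ (Set.range e ∪ Set.range fun j => -(e j))
      ⊆ {w : E | ⟪y, w⟫ ≤ M} := by
    apply convexHull_min _ (convex_halfSpace_le hlin M)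
    rintro w (⟨j, rfl⟩ | ⟨j, rfl⟩)
    · exact (le_abs_self _).trans (h j)
    · show ⟪y, -(e j)⟫ ≤ M
      rw [inner_neg_right]
      exact (neg_le_abs _).trans (h j)
  exact mul_le_mul_of_nonneg_left (hsub hw) hr

/-- Symmetrizing `Q = √n·conv{±e_j}` with respect to the first `n−1` vectors of an
orthonormal basis `u` whose entries satisfy `|⟨u_i,e_j⟩| ≤ δ` yields a body `Q̃` with
`h_{Q̃}(x) ≤ c √n δ log(2n) |x|` for a universal constant `c`. -/
theorem symmetrized_cross_polytope_bound :
    ∃ c : ℝ, 0 < c ∧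
      ∀ (n : ℕ) (e u : OrthonormalBasis (Fin n) ℝ (EuclideanSpace ℝ (Fin n))) (δ : ℝ),
        0 ≤ δ →
        (∀ i j : Fin n, |(inner ℝ (u i) (e j) : ℝ)| ≤ δ) →
        ∀ x : EuclideanSpace ℝ (Fin n),
          suppFn
            ((((List.finRange n).dropLast).map ⇑u).foldl (fun S v => msymm v S)
              ((Real.sqrt n : ℝ) •
                convexHull ℝ (Set.range ⇑e ∪ Set.range (fun j => -(e j)))))
            x
          ≤ c * Real.sqrt n * δ * Real.log (2 * n) * ‖x‖ := by
  refine ⟨4, by norm_num, ?_⟩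
  intro n e u δ hδ hb x
  rcases Nat.eq_zero_or_pos n with hn | hn
  · subst hn
    have h1 : (Set.range ⇑e ∪ Set.range fun j => -(e j)) = (∅ : Set _) := by simp
    simp only [List.finRange_zero, List.dropLast_nil, List.map_nil, List.foldl_nil, h1,
      convexHull_empty, Set.smul_set_empty]
    simp [suppFn, Real.sSup_empty]
  · obtain ⟨m, rfl⟩ : ∃ m, n = m + 1 := ⟨n - 1, (Nat.succ_pred_eq_of_pos hn).symm⟩
    clear hn
    have hlist : ((List.finRange (m+1)).dropLast).map ⇑u
        = List.ofFn (fun k : Fin m => u k.castSucc) := by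
      apply List.ext_getElem
      · simp
      · intro i h1 h2
        simp only [List.getElem_map, List.getElem_ofFn, List.getElem_dropLast,
          List.getElem_finRange]
        congr 1
    rw [hlist]
    set Q : Set (EuclideanSpace ℝ (Fin (m+1))) :=
      (Real.sqrt (m+1 : ℕ) : ℝ) • convexHull ℝ (Set.range ⇑e ∪ Set.range fun j => -(e j))
      with hQdef
    have hQcpt : IsCompact Q :=
      IsCompact.smul _ (((Set.finite_range ⇑e).union (Set.finite_range _)).isCompact_convexHull ℝ)
    have hQne : Q.Nonempty :=
      ⟨_, Set.smul_mem_smul_set (subset_convexHull ℝ _ (Set.mem_union_left _ ⟨0, rfl⟩))⟩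
    have horthg : ∀ k l : Fin m, k ≠ l →
        (⟪u k.castSucc, u l.castSucc⟫ : ℝ) = 0 := fun k l hkl =>
      u.orthonormal.2 (fun hc => hkl (Fin.castSucc_injective m hc))
    refine (suppFn_foldl_le m (fun k => u k.castSucc) Q hQne hQcpt x).trans ?_
    rcases eq_or_ne x 0 with rfl | hx
    · have hz : ∀ ε : Fin m → Bool,
          suppFn Q (fR (fun k => u k.castSucc) ε (0 : EuclideanSpace ℝ (Fin (m+1)))) ≤ 0 := by
        intro ε
        have h0 : fR (fun k => u k.castSucc) ε (0 : EuclideanSpace ℝ (Fin (m+1))) = 0 := by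
          rw [fR_eq _ horthg]
          simp [inner_zero_left]
        rw [h0]
        exact suppFn_le hQne fun y _ => le_of_eq (inner_zero_left y)
      rw [norm_zero, mul_zero]
      exact div_nonpos_iff.mpr (Or.inr ⟨Finset.sum_nonpos fun ε _ => hz ε, by positivity⟩)
    have hx' : 0 < ‖x‖ := norm_pos_iff.mpr hx
    have δpos : 0 < δ := by
      rcases hδ.lt_or_eq with h | h
      · exact h
      exfalso
      have h1 : (⟪e 0, e 0⟫ : ℝ) = 1 := by
        rw [real_inner_self_eq_norm_sq, e.orthonormal.1 0]; norm_num
      have h3 : ∀ i : Fin (m+1), (⟪u i, e 0⟫ : ℝ) = 0 := fun i => by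
        have h4 := hb i 0
        rw [← h] at h4
        exact abs_nonpos_iff.mp h4
      have h4 : (⟪e 0, e 0⟫ : ℝ) = 0 := by
        rw [← u.sum_inner_mul_inner (e 0) (e 0)]
        exact Finset.sum_eq_zero fun i _ => by rw [h3 i, mul_zero]
      rw [h1] at h4; norm_num at h4
    set σ := δ * ‖x‖ with hσdef
    have hσ : 0 < σ := mul_pos δpos hx'
    have hfr : ∀ ε : Fin m → Bool, fR (fun k => u k.castSucc) ε x
        = x - ∑ k : Fin m, (if ε k then 2 * ⟪x, u k.castSucc⟫ else 0) • u k.castSucc :=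
      fun ε => fR_eq _ horthg ε x
    have hXinner : ∀ (ε : Fin m → Bool) (j : Fin (m+1)),
        (⟪fR (fun k => u k.castSucc) ε x, e j⟫ : ℝ)
          = (∑ k : Fin m, (if ε k then (-1 : ℝ) else 1)
                * (⟪x, u k.castSucc⟫ * ⟪u k.castSucc, e j⟫))
            + ⟪x, u (Fin.last m)⟫ * ⟪u (Fin.last m), e j⟫ := by
      intro ε j
      rw [hfr ε, inner_sub_left, sum_inner]
      have hxe : (⟪x, e j⟫ : ℝ) = ∑ i : Fin (m+1), ⟪x, u i⟫ * ⟪u i, e j⟫ :=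
        (u.sum_inner_mul_inner x (e j)).symm
      rw [hxe, Fin.sum_univ_castSucc]
      simp only [real_inner_smul_left]
      rw [add_sub_right_comm, ← Finset.sum_sub_distrib]
      congr 1
      refine Finset.sum_congr rfl fun k _ => ?_
      by_cases h : ε k
      · rw [if_pos h, if_pos h]; ring
      · rw [if_neg h, if_neg h]; ring
    have habs : ∀ i : Fin (m+1), |(⟪x, u i⟫ : ℝ)| ≤ ‖x‖ := fun i => by
      have h5 := abs_real_inner_le_norm x (u i)
      rwa [u.orthonormal.1 i, mul_one] at h5
    have hsum : ∑ i : Fin (m+1), (⟪x, u i⟫ : ℝ) ^ 2 = ‖x‖ ^ 2 := by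
      have h2 := u.sum_inner_mul_inner x x
      rw [real_inner_self_eq_norm_sq] at h2
      rw [← h2]
      exact Finset.sum_congr rfl fun i _ => by
        rw [sq]; congr 1; exact real_inner_comm _ _
    have hc2 : ∀ j : Fin (m+1),
        ∑ k : Fin m, ((⟪x, u k.castSucc⟫ : ℝ) * ⟪u k.castSucc, e j⟫) ^ 2 ≤ σ ^ 2 := by
      intro j
      have h1 : ∀ k : Fin m, ((⟪x, u k.castSucc⟫ : ℝ) * ⟪u k.castSucc, e j⟫) ^ 2
          ≤ δ ^ 2 * (⟪x, u k.castSucc⟫ : ℝ) ^ 2 := by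
        intro k
        have hb2 : (⟪u k.castSucc, e j⟫ : ℝ) ^ 2 ≤ δ ^ 2 := by
          rw [← sq_abs]
          exact pow_le_pow_left₀ (abs_nonneg _) (hb _ j) 2
        rw [mul_pow]
        calc (⟪x, u k.castSucc⟫ : ℝ) ^ 2 * (⟪u k.castSucc, e j⟫ : ℝ) ^ 2
            ≤ (⟪x, u k.castSucc⟫ : ℝ) ^ 2 * δ ^ 2 :=
              mul_le_mul_of_nonneg_left hb2 (sq_nonneg _)
          _ = δ ^ 2 * (⟪x, u k.castSucc⟫ : ℝ) ^ 2 := by ring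
      calc ∑ k : Fin m, ((⟪x, u k.castSucc⟫ : ℝ) * ⟪u k.castSucc, e j⟫) ^ 2
          ≤ ∑ k : Fin m, δ ^ 2 * (⟪x, u k.castSucc⟫ : ℝ) ^ 2 :=
            Finset.sum_le_sum fun k _ => h1 k
        _ = δ ^ 2 * ∑ k : Fin m, (⟪x, u k.castSucc⟫ : ℝ) ^ 2 := (Finset.mul_sum _ _ _).symm
        _ ≤ δ ^ 2 * ‖x‖ ^ 2 := by
            refine mul_le_mul_of_nonneg_left ?_ (sq_nonneg δ)
            rw [← hsum, Fin.sum_univ_castSucc]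
            exact le_add_of_nonneg_right (sq_nonneg _)
        _ = σ ^ 2 := by rw [hσdef]; ring
    have hd : ∀ j : Fin (m+1), |(⟪x, u (Fin.last m)⟫ : ℝ) * ⟪u (Fin.last m), e j⟫| ≤ σ := by
      intro j
      rw [abs_mul, hσdef]
      calc |(⟪x, u (Fin.last m)⟫ : ℝ)| * |(⟪u (Fin.last m), e j⟫ : ℝ)|
          ≤ ‖x‖ * δ := mul_le_mul (habs _) (hb _ j) (abs_nonneg _) (norm_nonneg x)
        _ = δ * ‖x‖ := mul_comm _ _
    have hmgf : ∀ (j : Fin (m+1)) (t : ℝ), |t| = σ⁻¹ →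
        (∑ ε : Fin m → Bool, Real.exp (t * ⟪fR (fun k => u k.castSucc) ε x, e j⟫))
          ≤ 2 ^ m * Real.exp (3/2) := by
      intro j t ht
      rw [Finset.sum_congr rfl fun (ε : Fin m → Bool) _ => by rw [hXinner ε j]]
      refine (rad_mgf m (fun k => (⟪x, u k.castSucc⟫ : ℝ) * ⟪u k.castSucc, e j⟫)
        ((⟪x, u (Fin.last m)⟫ : ℝ) * ⟪u (Fin.last m), e j⟫) t).trans ?_
      refine mul_le_mul_of_nonneg_left (Real.exp_le_exp.mpr ?_) (by positivity)
      have h1 : t * ((⟪x, u (Fin.last m)⟫ : ℝ) * ⟪u (Fin.last m), e j⟫) ≤ 1 := by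
        calc t * _ ≤ |t * ((⟪x, u (Fin.last m)⟫ : ℝ) * ⟪u (Fin.last m), e j⟫)| := le_abs_self _
          _ = |t| * |(⟪x, u (Fin.last m)⟫ : ℝ) * ⟪u (Fin.last m), e j⟫| := abs_mul _ _
          _ ≤ σ⁻¹ * σ := by rw [ht]; exact mul_le_mul_of_nonneg_left (hd j) (by positivity)
          _ = 1 := inv_mul_cancel₀ hσ.ne'
      have h2 : t ^ 2 * (∑ k : Fin m,
          ((⟪x, u k.castSucc⟫ : ℝ) * ⟪u k.castSucc, e j⟫) ^ 2) / 2 ≤ 1/2 := by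
        have ht2 : t ^ 2 = σ⁻¹ ^ 2 := by rw [← sq_abs, ht]
        have h3 := mul_le_mul_of_nonneg_left (hc2 j) (inv_pos.mpr hσ).le
        have h4 : σ⁻¹ * σ ^ 2 = σ := by field_simp [hσ.ne']
        have h5 : (0:ℝ) < σ⁻¹ := inv_pos.mpr hσ
        rw [ht2]
        have h6 : σ⁻¹ ^ 2 * σ ^ 2 = 1 := by field_simp
        nlinarith [mul_le_mul_of_nonneg_left h3 h5.le]
      linarith
    set F : (Fin m → Bool) → ℝ := fun ε => ∑ j : Fin (m+1),
        (Real.exp (σ⁻¹ * ⟪fR (fun k => u k.castSucc) ε x, e j⟫)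
          + Real.exp (-σ⁻¹ * ⟪fR (fun k => u k.castSucc) ε x, e j⟫)) with hFdef
    have hterm : ∀ (ε : Fin m → Bool) (j : Fin (m+1)),
        2 ≤ Real.exp (σ⁻¹ * ⟪fR (fun k => u k.castSucc) ε x, e j⟫)
          + Real.exp (-σ⁻¹ * ⟪fR (fun k => u k.castSucc) ε x, e j⟫) := by
      intro ε j
      have h7 := Real.one_le_cosh (σ⁻¹ * ⟪fR (fun k => u k.castSucc) ε x, e j⟫)
      rw [Real.cosh_eq] at h7
      rw [neg_mul]
      linarith
    have hF1 : ∀ ε : Fin m → Bool, 2 ≤ F ε := by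
      intro ε
      refine (hterm ε 0).trans ?_
      simp only [hFdef]
      exact Finset.single_le_sum (f := (fun j : Fin (m+1) => Real.exp (σ⁻¹ * ⟪fR (fun k => u k.castSucc) ε x, e j⟫) + Real.exp (-σ⁻¹ * ⟪fR (fun k => u k.castSucc) ε x, e j⟫)))
        (fun j _ => by positivity) (Finset.mem_univ (0 : Fin (m+1)))
    have hXF : ∀ (ε : Fin m → Bool) (j : Fin (m+1)),
        |(⟪fR (fun k => u k.castSucc) ε x, e j⟫ : ℝ)| ≤ σ * Real.log (F ε) := by
      intro ε j
      have hexp : Real.exp (σ⁻¹ * |(⟪fR (fun k => u k.castSucc) ε x, e j⟫ : ℝ)|) ≤ F ε := by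
        rcases abs_cases (⟪fR (fun k => u k.castSucc) ε x, e j⟫ : ℝ) with ⟨ha', _⟩ | ⟨ha', _⟩
        · rw [ha']
          calc Real.exp (σ⁻¹ * ⟪fR (fun k => u k.castSucc) ε x, e j⟫)
              ≤ _ + Real.exp (-σ⁻¹ * ⟪fR (fun k => u k.castSucc) ε x, e j⟫) :=
                le_add_of_nonneg_right (Real.exp_pos _).le
            _ ≤ F ε := by
                simp only [hFdef]
                exact Finset.single_le_sum (f := (fun j : Fin (m+1) => Real.exp (σ⁻¹ * ⟪fR (fun k => u k.castSucc) ε x, e j⟫) + Real.exp (-σ⁻¹ * ⟪fR (fun k => u k.castSucc) ε x, e j⟫)))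
                  (fun j' _ => by positivity) (Finset.mem_univ j)
        · rw [ha', show σ⁻¹ * -(⟪fR (fun k => u k.castSucc) ε x, e j⟫ : ℝ)
              = -σ⁻¹ * ⟪fR (fun k => u k.castSucc) ε x, e j⟫ by ring]
          calc Real.exp (-σ⁻¹ * ⟪fR (fun k => u k.castSucc) ε x, e j⟫)
              ≤ Real.exp (σ⁻¹ * ⟪fR (fun k => u k.castSucc) ε x, e j⟫)
                + Real.exp (-σ⁻¹ * ⟪fR (fun k => u k.castSucc) ε x, e j⟫) :=
                le_add_of_nonneg_left (Real.exp_pos _).le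
            _ ≤ F ε := by
                simp only [hFdef]
                exact Finset.single_le_sum (f := (fun j : Fin (m+1) => Real.exp (σ⁻¹ * ⟪fR (fun k => u k.castSucc) ε x, e j⟫) + Real.exp (-σ⁻¹ * ⟪fR (fun k => u k.castSucc) ε x, e j⟫)))
                  (fun j' _ => by positivity) (Finset.mem_univ j)
      have hlog : σ⁻¹ * |(⟪fR (fun k => u k.castSucc) ε x, e j⟫ : ℝ)| ≤ Real.log (F ε) :=
        (Real.le_log_iff_exp_le (by linarith [hF1 ε])).mpr hexp
      calc |(⟪fR (fun k => u k.castSucc) ε x, e j⟫ : ℝ)|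
          = σ * (σ⁻¹ * |(⟪fR (fun k => u k.castSucc) ε x, e j⟫ : ℝ)|) := by
            field_simp
        _ ≤ σ * Real.log (F ε) := mul_le_mul_of_nonneg_left hlog hσ.le
    have hlogF : ∀ ε : Fin m → Bool, 0 ≤ Real.log (F ε) := fun ε =>
      Real.log_nonneg (by linarith [hF1 ε])
    have hQb : ∀ ε : Fin m → Bool, suppFn Q (fR (fun k => u k.castSucc) ε x)
        ≤ Real.sqrt (m+1 : ℕ) * (σ * Real.log (F ε)) := by
      intro ε
      rw [hQdef]
      exact suppFn_cross_le ⇑e _ _ (Real.sqrt_nonneg _) (mul_nonneg hσ.le (hlogF ε)) _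
        (fun j => hXF ε j)
    have hw : ∑ _ε : Fin m → Bool, ((2:ℝ) ^ m)⁻¹ = 1 := by
      rw [Finset.sum_const, Finset.card_univ, Fintype.card_fun, Fintype.card_fin,
        Fintype.card_bool, nsmul_eq_mul]
      push_cast
      field_simp
    have jensen := (strictConcaveOn_log_Ioi.concaveOn).le_map_sum
      (t := (Finset.univ : Finset (Fin m → Bool)))
      (w := fun _ => ((2:ℝ) ^ m)⁻¹) (p := F)
      (fun _ _ => by positivity) hw (fun ε _ => Set.mem_Ioi.mpr (by linarith [hF1 ε]))
    have hFsum : ∑ ε : Fin m → Bool, ((2:ℝ) ^ m)⁻¹ • F ε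
        ≤ 2 * ((m:ℝ)+1) * Real.exp (3/2) := by
      have hsum2 : ∑ ε : Fin m → Bool, F ε
          ≤ ((m:ℝ)+1) * (2 ^ m * Real.exp (3/2) + 2 ^ m * Real.exp (3/2)) := by
        rw [hFdef, Finset.sum_comm]
        calc ∑ j : Fin (m+1), ∑ ε : Fin m → Bool,
              (Real.exp (σ⁻¹ * ⟪fR (fun k => u k.castSucc) ε x, e j⟫)
                + Real.exp (-σ⁻¹ * ⟪fR (fun k => u k.castSucc) ε x, e j⟫))
            ≤ ∑ _j : Fin (m+1), (2 ^ m * Real.exp (3/2) + 2 ^ m * Real.exp (3/2)) := by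
              refine Finset.sum_le_sum fun j _ => ?_
              rw [Finset.sum_add_distrib]
              have hp1 := hmgf j σ⁻¹ (abs_of_pos (inv_pos.mpr hσ))
              have hp2 := hmgf j (-σ⁻¹) (by rw [abs_neg]; exact abs_of_pos (inv_pos.mpr hσ))
              exact add_le_add hp1 hp2
          _ = ((m:ℝ)+1) * (2 ^ m * Real.exp (3/2) + 2 ^ m * Real.exp (3/2)) := by
              rw [Finset.sum_const, Finset.card_univ, Fintype.card_fin, nsmul_eq_mul]
              push_cast
              ring
      calc ∑ ε : Fin m → Bool, ((2:ℝ) ^ m)⁻¹ • F ε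
          = ((2:ℝ) ^ m)⁻¹ * ∑ ε : Fin m → Bool, F ε := by
            rw [Finset.mul_sum]
            exact Finset.sum_congr rfl fun ε _ => by rw [smul_eq_mul]
        _ ≤ ((2:ℝ) ^ m)⁻¹ * (((m:ℝ)+1) * (2 ^ m * Real.exp (3/2) + 2 ^ m * Real.exp (3/2))) :=
            mul_le_mul_of_nonneg_left hsum2 (by positivity)
        _ = 2 * ((m:ℝ)+1) * Real.exp (3/2) := by field_simp; ring
    have hFsumpos : 0 < ∑ ε : Fin m → Bool, ((2:ℝ) ^ m)⁻¹ • F ε :=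
      Finset.sum_pos (fun ε _ => by
        rw [smul_eq_mul]
        exact mul_pos (by positivity) (by linarith [hF1 ε])) Finset.univ_nonempty
    have hlog2 : Real.log (∑ ε : Fin m → Bool, ((2:ℝ) ^ m)⁻¹ • F ε)
        ≤ Real.log (2 * ((m:ℝ)+1)) + 3/2 := by
      calc Real.log (∑ ε : Fin m → Bool, ((2:ℝ) ^ m)⁻¹ • F ε)
          ≤ Real.log (2 * ((m:ℝ)+1) * Real.exp (3/2)) := Real.log_le_log hFsumpos hFsum
        _ = Real.log (2 * ((m:ℝ)+1)) + 3/2 := by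
            rw [Real.log_mul (by positivity) (Real.exp_ne_zero _), Real.log_exp]
    have hlog3 : Real.log (2 * ((m:ℝ)+1)) + 3/2 ≤ 4 * Real.log (2 * ((m:ℝ)+1)) := by
      have h2 : Real.log 2 ≤ Real.log (2 * ((m:ℝ)+1)) := by
        apply Real.log_le_log two_pos
        have : (0:ℝ) ≤ (m:ℝ) := Nat.cast_nonneg m
        linarith
      have h3 := Real.log_two_gt_d9
      linarith
    calc (∑ ε : Fin m → Bool, suppFn Q (fR (fun k => u k.castSucc) ε x)) / 2 ^ m
        ≤ (∑ ε : Fin m → Bool, Real.sqrt (m+1 : ℕ) * (σ * Real.log (F ε))) / 2 ^ m :=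
          div_le_div_of_nonneg_right (Finset.sum_le_sum fun ε _ => hQb ε) (by positivity)
      _ = Real.sqrt (m+1 : ℕ) * σ * ∑ ε : Fin m → Bool, ((2:ℝ) ^ m)⁻¹ • Real.log (F ε) := by
          rw [Finset.mul_sum, Finset.sum_div]
          refine Finset.sum_congr rfl fun ε _ => ?_
          rw [smul_eq_mul]
          field_simp
      _ ≤ Real.sqrt (m+1 : ℕ) * σ * Real.log (∑ ε : Fin m → Bool, ((2:ℝ) ^ m)⁻¹ • F ε) :=
          mul_le_mul_of_nonneg_left jensen (by positivity)
      _ ≤ Real.sqrt (m+1 : ℕ) * σ * (Real.log (2 * ((m:ℝ)+1)) + 3/2) :=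
          mul_le_mul_of_nonneg_left hlog2 (by positivity)
      _ ≤ Real.sqrt (m+1 : ℕ) * σ * (4 * Real.log (2 * ((m:ℝ)+1))) := by
          refine mul_le_mul_of_nonneg_left ?_ (by positivity)
          have := hlog3
          push_cast
          linarith
      _ = 4 * Real.sqrt (m+1 : ℕ) * δ * Real.log (2 * ((m:ℕ)+1 : ℕ)) * ‖x‖ := by
          rw [hσdef]
          push_cast
          ring
end

section
/- For every n ≥ 1 there exists an orthonormal basis w₁, …, wₙ of ℝⁿ such that |⟨w_i, e_j⟩| ≤ 2/√n for all i, j, where e₁, …, eₙ is the standard basis. -/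
/-!
The rows `√(2/n) · cos((2k+1)(2j+1)π/(4n))` of the orthogonal DCT-IV matrix form such a basis.
By product-to-sum, the inner product of two rows reduces to sums
`∑_{j<n} cos((2j+1)θ)` with `θ = mπ/(2n)` and `|m| < 2n`, which telescope against
`2 sin θ` to `sin(2nθ) = sin(mπ) = 0` unless `m = 0`. All entries are bounded by
`√(2/n) ≤ 2/√n`.
-/

open Real Finset

theorem two_mul_sin_mul_sum_range_cos_odd_mul (θ : ℝ) (n : ℕ) :
    2 * sin θ * ∑ j ∈ range n, cos ((2 * j + 1) * θ) = sin (2 * n * θ) := by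
  induction n with
  | zero => simp
  | succ n ih =>
    rw [sum_range_succ, mul_add, ih]
    have h₁ : 2 * ((n + 1 : ℕ) : ℝ) * θ = (2 * n + 1) * θ + θ := by push_cast; ring
    have h₂ : 2 * (n : ℝ) * θ = (2 * n + 1) * θ - θ := by ring
    rw [h₁, h₂, sin_add, sin_sub]
    ring

theorem sum_range_cos_odd_mul_pi_div_eq_zero (n : ℕ) {m : ℤ} (hm : ¬ (2 * n : ℤ) ∣ m) :
    ∑ j ∈ range n, cos ((2 * j + 1) * (m * π / (2 * n))) = 0 := by
  rcases n.eq_zero_or_pos with rfl | hn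
  · simp
  have hn' : (n : ℝ) ≠ 0 := by positivity
  have hsin : sin (m * π / (2 * n)) ≠ 0 := by
    rintro hsin
    obtain ⟨k, hk⟩ := sin_eq_zero_iff.1 hsin
    refine hm ⟨k, ?_⟩
    field_simp at hk
    exact_mod_cast (by linarith : (m : ℝ) = 2 * n * k)
  have key := two_mul_sin_mul_sum_range_cos_odd_mul (m * π / (2 * n)) n
  rw [show 2 * (n : ℝ) * (m * π / (2 * n)) = m * π by field_simp, sin_int_mul_pi] at key
  exact (mul_eq_zero.1 key).resolve_left (mul_ne_zero two_ne_zero hsin)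

theorem sum_cos_mul_cos_odd_mul_odd_mul_pi_div {n : ℕ} (k l : Fin n) :
    ∑ j : Fin n, cos ((2 * k + 1) * (2 * j + 1) * π / (4 * n)) *
      cos ((2 * l + 1) * (2 * j + 1) * π / (4 * n)) = if k = l then (n / 2 : ℝ) else 0 := by
  have hn : (n : ℝ) ≠ 0 := by have := k.pos; positivity
  have product_to_sum : ∀ j : ℕ, cos ((2 * k + 1) * (2 * j + 1) * π / (4 * n)) *
      cos ((2 * l + 1) * (2 * j + 1) * π / (4 * n)) =
      (cos ((2 * j + 1) * (((k - l : ℤ) : ℝ) * π / (2 * n))) +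
        cos ((2 * j + 1) * (((k + l + 1 : ℤ) : ℝ) * π / (2 * n)))) / 2 := by
    intro j
    rw [show (2 * j + 1) * (((k - l : ℤ) : ℝ) * π / (2 * n)) =
        (2 * k + 1) * (2 * j + 1) * π / (4 * n) - (2 * l + 1) * (2 * j + 1) * π / (4 * n) by
          push_cast; field_simp; ring,
      show (2 * j + 1) * (((k + l + 1 : ℤ) : ℝ) * π / (2 * n)) =
        (2 * k + 1) * (2 * j + 1) * π / (4 * n) + (2 * l + 1) * (2 * j + 1) * π / (4 * n) by
          push_cast; field_simp; ring,
      cos_sub, cos_add]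
    ring
  have not_dvd : ∀ m : ℤ, m ≠ 0 → |m| < 2 * n → ¬ (2 * n : ℤ) ∣ m :=
    fun m hm hlt hdvd => hm (Int.eq_zero_of_abs_lt_dvd hdvd hlt)
  rw [Fin.sum_univ_eq_sum_range (fun j => cos ((2 * k + 1) * (2 * j + 1) * π / (4 * n)) *
      cos ((2 * l + 1) * (2 * j + 1) * π / (4 * n))) n]
  simp_rw [product_to_sum, ← sum_div, sum_add_distrib]
  have hk := k.isLt
  have hl := l.isLt
  rw [sum_range_cos_odd_mul_pi_div_eq_zero n (m := k + l + 1)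
    (not_dvd _ (by omega) (by rw [abs_lt]; omega))]
  split_ifs with hkl
  · simp [hkl]
  · rw [sum_range_cos_odd_mul_pi_div_eq_zero n (not_dvd _ (by omega) (by rw [abs_lt]; omega))]
    simp

noncomputable def dctIV (n : ℕ) (k : Fin n) : EuclideanSpace ℝ (Fin n) :=
  WithLp.toLp 2 fun j => √(2 / n) * cos ((2 * k + 1) * (2 * j + 1) * π / (4 * n))

theorem orthonormal_dctIV (n : ℕ) : Orthonormal ℝ (dctIV n) := by
  rw [orthonormal_iff_ite]
  intro k l
  have hn : (n : ℝ) ≠ 0 := by have := k.pos; positivity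
  calc inner ℝ (dctIV n k) (dctIV n l)
      = √(2 / n) ^ 2 * ∑ j : Fin n, cos ((2 * k + 1) * (2 * j + 1) * π / (4 * n)) *
          cos ((2 * l + 1) * (2 * j + 1) * π / (4 * n)) := by
        simp only [dctIV, PiLp.inner_apply, RCLike.inner_apply, conj_trivial, mul_sum]
        exact sum_congr rfl fun j _ => by ring
    _ = if k = l then 1 else 0 := by
        rw [sum_cos_mul_cos_odd_mul_odd_mul_pi_div, sq_sqrt (by positivity), mul_ite, mul_zero,
          show (2 / n : ℝ) * (n / 2) = 1 by field_simp]

noncomputable def dctIVBasis (n : ℕ) :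
    OrthonormalBasis (Fin n) ℝ (EuclideanSpace ℝ (Fin n)) :=
  .mk (orthonormal_dctIV n)
    ((orthonormal_dctIV n).linearIndependent.span_eq_top_of_card_eq_finrank' (by simp)).ge

theorem abs_dctIVBasis_apply_le {n : ℕ} (k j : Fin n) : |dctIVBasis n k j| ≤ √(2 / n) := by
  rw [dctIVBasis, OrthonormalBasis.coe_mk, dctIV, PiLp.toLp_apply, abs_mul,
    abs_of_nonneg (sqrt_nonneg _)]
  exact mul_le_of_le_one_right (sqrt_nonneg _) (abs_cos_le_one _)

theorem sqrt_two_div_le_two_div_sqrt (x : ℝ) : √(2 / x) ≤ 2 / √x := by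
  rw [sqrt_div zero_le_two]
  gcongr
  exact sqrt_le_iff.2 ⟨zero_le_two, by norm_num⟩

theorem exists_walsh_type_basis_general (n : ℕ) :
    ∃ w : OrthonormalBasis (Fin n) ℝ (EuclideanSpace ℝ (Fin n)),
      ∀ i j : Fin n, |w i j| ≤ 2 / Real.sqrt n :=
  ⟨dctIVBasis n, fun i j =>
    (abs_dctIVBasis_apply_le i j).trans (sqrt_two_div_le_two_div_sqrt n)⟩

/-- Walsh-type basis: for every `n ≥ 1` there is an orthonormal basis `w₁,…,wₙ` of `ℝⁿ`
all of whose coordinates in the standard basis are at most `2/√n` in absolute value. -/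
theorem exists_walsh_type_basis (n : ℕ) (hn : 1 ≤ n) :
    ∃ w : OrthonormalBasis (Fin n) ℝ (EuclideanSpace ℝ (Fin n)),
      ∀ i j : Fin n, |w i j| ≤ 2 / Real.sqrt n :=
  exists_walsh_type_basis_general n
end
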